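/- arXiv:0811.4553 — 3 statements merged into one kernel-verified Lean document; each statement's English description precedes it below -/
import Mathlib

section
/- Let N ≥ 1 be an integer and A > 0. Then: (i) there exist a smooth map a : ℝ → ℝ^N and a constant C > 0 such that for every (u,σ) ∈ ℝ × ℝ^N with u² + ‖σ‖² = 1 and every ε > 0, meas{ v ∈ [−A,A] : |a(v)·σ − u| ≤ ε } ≤ C·ε^{1/N}; and (ii) for every smooth map a : ℝ → ℝ^N, every α > 0 and every C > 0 such that the same bound with exponent α holds for all (u,σ) with u² + ‖σ‖² = 1 and all ε > 0, one has α ≤ 1/N. In other words, the optimal exponent in the non-degeneracy condition for one-dimensional velocity is α_opt(N,1) = 1/N. -/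
set_option maxHeartbeats 1000000


open MeasureTheory


open MeasureTheory Polynomial Set

lemma growth_of_deriv_ge (q : ℝ[X]) (a b lam : ℝ)
    (h : ∀ x ∈ Icc a b, lam ≤ (derivative q).eval x) :
    ∀ x ∈ Icc a b, ∀ y ∈ Icc a b, x ≤ y → lam * (y - x) ≤ q.eval y - q.eval x := by
  intro x hx y hy hxy
  rcases eq_or_lt_of_le hxy with rfl | hlt
  · simp
  obtain ⟨c, hc, hc2⟩ := exists_deriv_eq_slope (fun t => q.eval t) hlt
    (q.continuousOn) (fun t _ => (q.differentiableAt).differentiableWithinAt)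
  have hcab : c ∈ Icc a b := ⟨hx.1.trans hc.1.le, hc.2.le.trans hy.2⟩
  have h2 : lam ≤ (q.eval y - q.eval x) / (y - x) := by
    rw [← hc2]; rw [Polynomial.deriv]; exact h c hcab
  have h3 : 0 < y - x := by linarith
  calc lam * (y - x) ≤ ((q.eval y - q.eval x) / (y - x)) * (y - x) :=
        mul_le_mul_of_nonneg_right h2 h3.le
    _ = q.eval y - q.eval x := div_mul_cancel₀ _ h3.ne'

lemma sign_dichotomy (q : ℝ[X]) (a b lam : ℝ) (hlam : 0 < lam)
    (h : ∀ x ∈ Icc a b, lam ≤ |(derivative q).eval x|) :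
    (∀ x ∈ Icc a b, lam ≤ (derivative q).eval x) ∨
    (∀ x ∈ Icc a b, (derivative q).eval x ≤ -lam) := by
  by_contra hcon
  push_neg at hcon
  obtain ⟨⟨x, hx, hx2⟩, ⟨y, hy, hy2⟩⟩ := hcon
  have hxv : (derivative q).eval x ≤ -lam := by
    rcases le_abs.mp (h x hx) with h1 | h1
    · exact absurd h1 (not_le.mpr hx2)
    · linarith
  have hyv : lam ≤ (derivative q).eval y := by
    rcases le_abs.mp (h y hy) with h1 | h1
    · exact h1
    · linarith
  have hsub : uIcc x y ⊆ Icc a b := uIcc_subset_Icc hx hy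
  have hcont : ContinuousOn (fun t => (derivative q).eval t) (uIcc x y) :=
    (derivative q).continuousOn
  have h0 : (0:ℝ) ∈ uIcc ((fun t => (derivative q).eval t) x)
      ((fun t => (derivative q).eval t) y) := by
    rw [Set.mem_uIcc]; left; constructor <;> linarith
  obtain ⟨z, hz, hz2⟩ := intermediate_value_uIcc hcont h0
  have := h z (hsub hz)
  simp only [] at hz2
  rw [hz2] at this; simp at this; linarith

lemma closed_subset_bound {S : Set ℝ} {a b bound : ℝ} (hS : IsClosed S)
    (hsub : S ⊆ Icc a b) (hbd : ∀ x ∈ S, ∀ y ∈ S, x ≤ y → y - x ≤ bound) :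
    volume S ≤ ENNReal.ofReal bound := by
  rcases S.eq_empty_or_nonempty with rfl | hne
  · simp
  have hba : BddAbove S := BddAbove.mono hsub bddAbove_Icc
  have hbb : BddBelow S := BddBelow.mono hsub bddBelow_Icc
  have hsup := hS.csSup_mem hne hba
  have hinf := hS.csInf_mem hne hbb
  calc volume S ≤ volume (Icc (sInf S) (sSup S)) :=
        measure_mono (subset_Icc_csInf_csSup hbb hba)
    _ = ENNReal.ofReal (sSup S - sInf S) := Real.volume_Icc
    _ ≤ ENNReal.ofReal bound := ENNReal.ofReal_le_ofReal
        (hbd _ hinf _ hsup (csInf_le_csSup hne hbb hba))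

lemma sublevel_closed (p : ℝ[X]) (a b ε : ℝ) :
    IsClosed {x | x ∈ Icc a b ∧ |p.eval x| ≤ ε} := by
  have : {x | x ∈ Icc a b ∧ |p.eval x| ≤ ε}
      = Icc a b ∩ {x | |p.eval x| ≤ ε} := rfl
  rw [this]
  exact isClosed_Icc.inter (isClosed_le (by fun_prop) continuous_const)

lemma vdc_base_pos (p : ℝ[X]) (a b lam ε : ℝ) (hlam : 0 < lam)
    (h : ∀ x ∈ Icc a b, lam ≤ (derivative p).eval x) :
    volume {x | x ∈ Icc a b ∧ |p.eval x| ≤ ε} ≤ ENNReal.ofReal (2 * ε / lam) := by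
  apply closed_subset_bound (sublevel_closed p a b ε) (fun x hx => hx.1)
  intro x hx y hy hxy
  have hg := growth_of_deriv_ge p a b lam h x hx.1 y hy.1 hxy
  have h1 : p.eval y - p.eval x ≤ 2 * ε := by
    have := abs_le.mp hx.2; have := abs_le.mp hy.2; linarith
  rw [le_div_iff₀ hlam]
  nlinarith [hg]

lemma vdc (k : ℕ) (hk : 1 ≤ k) : ∀ (p : ℝ[X]) (a b lam ε : ℝ), 0 < lam → 0 < ε →
    (∀ x ∈ Icc a b, lam ≤ |(derivative^[k] p).eval x|) →
    volume {x | x ∈ Icc a b ∧ |p.eval x| ≤ ε} ≤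
      ENNReal.ofReal ((3:ℝ)^k * (ε/lam) ^ ((1:ℝ)/k)) := by
  induction k, hk using Nat.le_induction with
  | base =>
    intro p a b lam ε hlam hε h
    simp only [Function.iterate_one] at h
    push_cast
    have hb : (3:ℝ)^1 * (ε/lam) ^ ((1:ℝ)/1) = 3 * (ε/lam) := by norm_num
    rw [hb]
    have h2 : ENNReal.ofReal (2 * ε / lam) ≤ ENNReal.ofReal (3 * (ε/lam)) := by
      apply ENNReal.ofReal_le_ofReal
      rw [mul_div_assoc]
      have : 0 ≤ ε / lam := div_nonneg hε.le hlam.le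
      linarith
    refine le_trans ?_ h2
    rcases sign_dichotomy p a b lam hlam h with hpos | hneg
    · exact vdc_base_pos p a b lam ε hlam hpos
    · have hset : {x | x ∈ Icc a b ∧ |p.eval x| ≤ ε}
          = {x | x ∈ Icc a b ∧ |(-p).eval x| ≤ ε} := by
        ext x; simp [abs_neg]
      rw [hset]
      apply vdc_base_pos (-p) a b lam ε hlam
      intro x hx
      rw [map_neg, eval_neg]
      linarith [hneg x hx]
  | succ k hk IH =>
    intro p a b lam ε hlam hε h
    push_cast
    -- reduce to the positive-sign case
    suffices key : ∀ p : ℝ[X],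
        (∀ x ∈ Icc a b, lam ≤ (derivative (derivative^[k] p)).eval x) →
        volume {x | x ∈ Icc a b ∧ |p.eval x| ≤ ε} ≤
          ENNReal.ofReal ((3:ℝ)^(k+1) * (ε/lam) ^ ((1:ℝ)/((k:ℝ)+1))) by
      simp only [Function.iterate_succ_apply'] at h
      rcases sign_dichotomy (derivative^[k] p) a b lam hlam h with hpos | hneg
      · exact key p hpos
      · have hneg' : ∀ x ∈ Icc a b,
            lam ≤ (derivative (derivative^[k] (-p))).eval x := by
          intro x hx
          rw [Polynomial.iterate_derivative_neg, map_neg, eval_neg]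
          linarith [hneg x hx]
        have hset : {x | x ∈ Icc a b ∧ |p.eval x| ≤ ε}
            = {x | x ∈ Icc a b ∧ |(-p).eval x| ≤ ε} := by
          ext x; simp [abs_neg]
        rw [hset]
        exact key (-p) hneg'
    intro p hpos
    set q := derivative^[k] p with hq
    set e : ℝ := 1/((k:ℝ)+1) with he
    have hk0 : (0:ℝ) < k := by exact_mod_cast hk
    have hk1 : (0:ℝ) < (k:ℝ)+1 := by linarith
    have he0 : 0 < e := by positivity
    have he1 : e < 1 := by rw [he, div_lt_one hk1]; linarith
    set δ : ℝ := ε ^ e * lam ^ (1-e) with hδ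
    have hδ0 : 0 < δ := by positivity
    have hG := growth_of_deriv_ge q a b lam hpos
    set X : ℝ := (ε/lam) ^ e with hX
    have hX0 : 0 < X := by positivity
    have hdl : δ / lam = X := by
      rw [hδ, hX, Real.div_rpow hε.le hlam.le,
        Real.rpow_sub hlam, Real.rpow_one]
      field_simp
    have hed : (ε/δ) ^ ((1:ℝ)/(k:ℝ)) = X := by
      have h1 : ε / δ = (ε/lam) ^ (1-e) := by
        rw [hδ, Real.div_rpow hε.le hlam.le,
          Real.rpow_sub hε, Real.rpow_sub hlam, Real.rpow_one, Real.rpow_one]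
        field_simp
      rw [h1, ← Real.rpow_mul (by positivity)]
      have h2 : (1-e) * ((1:ℝ)/(k:ℝ)) = e := by
        rw [he]; field_simp; ring
      rw [h2, hX]
    -- the three pieces
    set S := {x | x ∈ Icc a b ∧ |p.eval x| ≤ ε} with hS
    set T := {x | x ∈ Icc a b ∧ |q.eval x| ≤ δ} with hT
    set L := {x | x ∈ Icc a b ∧ q.eval x ≤ -δ} with hL
    set R := {x | x ∈ Icc a b ∧ δ ≤ q.eval x} with hR
    have hTbound : volume T ≤ ENNReal.ofReal (2 * δ / lam) := by
      apply closed_subset_bound (sublevel_closed q a b δ) (fun x hx => hx.1)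
      intro x hx y hy hxy
      have hg := hG x hx.1 y hy.1 hxy
      have h1 : q.eval y - q.eval x ≤ 2 * δ := by
        have := abs_le.mp hx.2; have := abs_le.mp hy.2; linarith
      rw [le_div_iff₀ hlam]
      nlinarith [hg]
    have hLbound : volume (S ∩ L) ≤ ENNReal.ofReal ((3:ℝ)^k * (ε/δ) ^ ((1:ℝ)/(k:ℝ))) := by
      rcases L.eq_empty_or_nonempty with hLe | hLne
      · rw [hLe]; simp
      · have hLc : IsClosed L := by
          have hh : L = Icc a b ∩ {x | q.eval x ≤ -δ} := rfl
          rw [hh]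
          exact isClosed_Icc.inter (isClosed_le q.continuous continuous_const)
        have hba : BddAbove L := BddAbove.mono (fun x hx => hx.1) bddAbove_Icc
        have hcm := hLc.csSup_mem hLne hba
        set c := sSup L with hc
        have hsub : S ∩ L ⊆ {x | x ∈ Icc a c ∧ |p.eval x| ≤ ε} := by
          rintro x ⟨hxS, hxL⟩
          exact ⟨⟨hxL.1.1, le_csSup hba hxL⟩, hxS.2⟩
        refine le_trans (measure_mono hsub) ?_
        apply IH p a c δ ε hδ0 hε
        intro x hx
        have hxab : x ∈ Icc a b := ⟨hx.1, hx.2.trans hcm.1.2⟩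
        have hg := hG x hxab c hcm.1 hx.2
        have hqx : q.eval x ≤ -δ := by nlinarith [hcm.2, hlam.le, sub_nonneg.mpr hx.2]
        rw [abs_of_nonpos (by linarith)]
        linarith
    have hRbound : volume (S ∩ R) ≤ ENNReal.ofReal ((3:ℝ)^k * (ε/δ) ^ ((1:ℝ)/(k:ℝ))) := by
      rcases R.eq_empty_or_nonempty with hRe | hRne
      · rw [hRe]; simp
      · have hRc : IsClosed R := by
          have hh : R = Icc a b ∩ {x | δ ≤ q.eval x} := rfl
          rw [hh]
          exact isClosed_Icc.inter (isClosed_le continuous_const q.continuous)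
        have hbb : BddBelow R := BddBelow.mono (fun x hx => hx.1) bddBelow_Icc
        have hcm := hRc.csInf_mem hRne hbb
        set c := sInf R with hc
        have hsub : S ∩ R ⊆ {x | x ∈ Icc c b ∧ |p.eval x| ≤ ε} := by
          rintro x ⟨hxS, hxR⟩
          exact ⟨⟨csInf_le hbb hxR, hxR.1.2⟩, hxS.2⟩
        refine le_trans (measure_mono hsub) ?_
        apply IH p c b δ ε hδ0 hε
        intro x hx
        have hxab : x ∈ Icc a b := ⟨hcm.1.1.trans hx.1, hx.2⟩
        have hg := hG c hcm.1 x hxab hx.1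
        have hqx : δ ≤ q.eval x := by nlinarith [hcm.2, hlam.le, sub_nonneg.mpr hx.1]
        rw [abs_of_nonneg (by linarith)]
        exact hqx
    have hcover : S ⊆ (S ∩ L) ∪ (T ∪ (S ∩ R)) := by
      intro x hx
      rcases le_or_gt (q.eval x) (-δ) with h1 | h1
      · exact Or.inl ⟨hx, hx.1, h1⟩
      rcases le_or_gt δ (q.eval x) with h2 | h2
      · exact Or.inr (Or.inr ⟨hx, hx.1, h2⟩)
      · exact Or.inr (Or.inl ⟨hx.1, abs_le.mpr ⟨h1.le, h2.le⟩⟩)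
    calc volume S ≤ volume ((S ∩ L) ∪ (T ∪ (S ∩ R))) := measure_mono hcover
      _ ≤ volume (S ∩ L) + (volume T + volume (S ∩ R)) := by
          refine le_trans (measure_union_le _ _) ?_
          exact add_le_add le_rfl (measure_union_le _ _)
      _ ≤ ENNReal.ofReal ((3:ℝ)^k * (ε/δ) ^ ((1:ℝ)/(k:ℝ)))
          + (ENNReal.ofReal (2 * δ / lam)
             + ENNReal.ofReal ((3:ℝ)^k * (ε/δ) ^ ((1:ℝ)/(k:ℝ)))) := by
          exact add_le_add hLbound (add_le_add hTbound hRbound)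
      _ ≤ ENNReal.ofReal ((3:ℝ)^(k+1) * (ε/lam) ^ ((1:ℝ)/((k:ℝ)+1))) := by
          rw [← ENNReal.ofReal_add (by positivity) (by positivity),
            ← ENNReal.ofReal_add (by positivity) (by positivity)]
          apply ENNReal.ofReal_le_ofReal
          rw [hed]
          have hdl2 : 2 * δ / lam = 2 * X := by
            rw [mul_div_assoc, hdl]
          rw [hdl2]
          have h3 : (3:ℝ) ≤ (3:ℝ)^k := by
            calc (3:ℝ) = 3^1 := (pow_one 3).symm
            _ ≤ 3^k := pow_le_pow_right₀ (by norm_num) hk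
          have hXe : (ε/lam) ^ ((1:ℝ)/((k:ℝ)+1)) = X := rfl
          rw [hXe, pow_succ]
          nlinarith [hX0.le, h3]

section
variable (N : ℕ) (u : ℝ) (σ : Fin N → ℝ)

noncomputable def cf : ℕ → ℝ := fun i =>
  match i with
  | 0 => -u
  | (i+1) => if h : i < N then σ ⟨i, h⟩ else 0

noncomputable def pol : ℝ[X] := ∑ i ∈ Finset.range (N+1), C (cf N u σ i) * X^i

lemma cf_sq (hsum : u ^ 2 + ∑ i, σ i ^ 2 = 1) :
    ∑ i ∈ Finset.range (N+1), (cf N u σ i)^2 = 1 := by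
  rw [Finset.sum_range_succ']
  have h1 : ∀ i ∈ Finset.range N, (cf N u σ (i+1))^2
      = (fun k => if h : k < N then (σ ⟨k, h⟩)^2 else 0) i := by
    intro i hi
    have hi' : i < N := Finset.mem_range.mp hi
    simp [cf, hi']
  rw [Finset.sum_congr rfl h1]
  have h2 : ∑ i ∈ Finset.range N, (fun k => if h : k < N then (σ ⟨k, h⟩)^2 else 0) i
      = ∑ i : Fin N, σ i ^ 2 := by
    rw [← Fin.sum_univ_eq_sum_range]
    apply Finset.sum_congr rfl
    intro i _
    simp [i.isLt]
  rw [h2]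
  simp only [cf]
  nlinarith [hsum]

lemma pol_eval (x : ℝ) :
    (pol N u σ).eval x = (∑ i : Fin N, x^((i:ℕ)+1) * σ i) - u := by
  rw [pol, eval_finset_sum]
  simp only [eval_mul, eval_C, eval_pow, eval_X]
  rw [Finset.sum_range_succ']
  have h1 : ∀ i ∈ Finset.range N, cf N u σ (i+1) * x^(i+1)
      = (fun k => if h : k < N then x^(k+1) * σ ⟨k, h⟩ else 0) i := by
    intro i hi
    have hi' : i < N := Finset.mem_range.mp hi
    simp [cf, hi']
    ring
  rw [Finset.sum_congr rfl h1]
  have h2 : ∑ i ∈ Finset.range N, (fun k => if h : k < N then x^(k+1) * σ ⟨k, h⟩ else 0) i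
      = ∑ i : Fin N, x^((i:ℕ)+1) * σ i := by
    rw [← Fin.sum_univ_eq_sum_range]
    apply Finset.sum_congr rfl
    intro i _
    simp [i.isLt]
  rw [h2]
  simp only [cf]
  ring

lemma pol_iter_deriv (j : ℕ) (x : ℝ) :
    (derivative^[j] (pol N u σ)).eval x
      = ∑ i ∈ Finset.range (N+1), cf N u σ i * (i.descFactorial j : ℝ) * x^(i-j) := by
  rw [pol, iterate_derivative_sum]
  rw [eval_finset_sum]
  apply Finset.sum_congr rfl
  intro i _
  rw [Polynomial.iterate_derivative_C_mul, Polynomial.iterate_derivative_X_pow_eq_C_mul]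
  simp [mul_assoc]
end

lemma part_one (N : ℕ) (hN : 1 ≤ N) (A : ℝ) (hA : 0 < A) :
    ∀ (u : ℝ) (σ : Fin N → ℝ), u ^ 2 + ∑ i, σ i ^ 2 = 1 → ∀ ε : ℝ, 0 < ε →
        volume {v : ℝ | v ∈ Set.Icc (-A) A ∧ |(∑ i : Fin N, v^((i:ℕ)+1) * σ i) - u| ≤ ε} ≤
          ENNReal.ofReal (((3:ℝ)^N + 2*A) * (1/((1/(2*(N:ℝ)*(N.factorial)*(1+A)^N + 1))^N * (1/((N:ℝ)+1)) / 2)) ^ ((1:ℝ)/N) * ε ^ ((1 : ℝ) / N)) := by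
  set m : ℝ := 1/((N:ℝ)+1) with hm
  set θ : ℝ := 1/(2*(N:ℝ)*(N.factorial)*(1+A)^N + 1) with hθ
  have hm0 : 0 < m := by positivity
  have hm1 : m ≤ 1 := by
    rw [hm, div_le_one (by positivity)]
    have : (0:ℝ) ≤ (N:ℝ) := Nat.cast_nonneg N
    linarith
  have hθ0 : 0 < θ := by positivity
  have hθ1 : θ ≤ 1 := by
    rw [hθ, div_le_one (by positivity)]
    have h1 : (0:ℝ) ≤ 2*(N:ℝ)*(N.factorial)*(1+A)^N := by positivity
    linarith
  have hθD : θ * ((N:ℝ) * (N.factorial) * (1+A)^N) ≤ 1/2 := by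
    have hD0 : (0:ℝ) ≤ (N:ℝ)*(N.factorial)*(1+A)^N := by positivity
    rw [hθ, div_mul_eq_mul_div, one_mul, div_le_iff₀ (by positivity)]
    nlinarith [hD0]
  set lam : ℝ := θ^N * m / 2 with hlam
  have hlam0 : 0 < lam := by positivity
  intro u σ hsum ε hε
  set c := cf N u σ with hcdef
  set p := pol N u σ with hpdef
  have hset : {v : ℝ | v ∈ Icc (-A) A ∧ |(∑ i : Fin N, v^((i:ℕ)+1) * σ i) - u| ≤ ε}
      = {x | x ∈ Icc (-A) A ∧ |p.eval x| ≤ ε} := by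
    ext x
    simp only [Set.mem_setOf_eq, hpdef, pol_eval]
  rw [hset]
  have hcsq := cf_sq N u σ hsum
  -- there is a large coefficient
  have hex : ∃ i ∈ Finset.range (N+1), m ≤ |c i| := by
    by_contra hcon
    push_neg at hcon
    have hlt : ∀ i ∈ Finset.range (N+1), (c i)^2 < m := by
      intro i hi
      have h1 := hcon i hi
      nlinarith [abs_nonneg (c i), sq_abs (c i)]
    have hsumlt := Finset.sum_lt_sum_of_nonempty
      (Finset.nonempty_range_iff.mpr (Nat.succ_ne_zero N)) hlt
    rw [hcsq, Finset.sum_const, Finset.card_range, nsmul_eq_mul] at hsumlt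
    have hone : ((N:ℝ)+1) * m = 1 := by
      rw [hm]; field_simp
    push_cast at hsumlt
    linarith
  set S := (Finset.range (N+1)).filter (fun i => θ^i * m ≤ |c i|) with hS
  have hSne : S.Nonempty := by
    obtain ⟨i, hi, hmi⟩ := hex
    refine ⟨i, Finset.mem_filter.mpr ⟨hi, le_trans ?_ hmi⟩⟩
    nlinarith [pow_le_one₀ hθ0.le hθ1 (n := i), pow_pos hθ0 i]
  set j := S.max' hSne with hj
  have hjS := S.max'_mem hSne
  have hjmem : j ∈ Finset.range (N+1) := (Finset.mem_filter.mp hjS).1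
  have hjN : j ≤ N := Nat.lt_succ_iff.mp (Finset.mem_range.mp hjmem)
  have hjth : θ^j * m ≤ |c j| := (Finset.mem_filter.mp hjS).2
  have hgt : ∀ i ∈ Finset.range (N+1), j < i → |c i| < θ^i * m := by
    intro i hi hji
    by_contra hcon
    push_neg at hcon
    have hiS : i ∈ S := Finset.mem_filter.mpr ⟨hi, hcon⟩
    exact absurd (S.le_max' i hiS) (not_le.mpr hji)
  -- lower bound for the j-th derivative on [-A, A]
  have hlow : ∀ x ∈ Icc (-A) A, lam ≤ |(derivative^[j] p).eval x| := by
    intro x hx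
    have hxabs : |x| ≤ A := abs_le.mpr ⟨hx.1, hx.2⟩
    rw [hpdef, pol_iter_deriv, ← Finset.add_sum_erase _ _ hjmem]
    have hmain : c j * ((j.descFactorial j : ℕ) : ℝ) * x^(j-j) = c j * (j.factorial : ℝ) := by
      rw [Nat.descFactorial_self, Nat.sub_self, pow_zero, mul_one]
    rw [hmain]
    set rest := ∑ i ∈ (Finset.range (N+1)).erase j,
      c i * ((i.descFactorial j : ℕ) : ℝ) * x^(i-j) with hrest
    have hRb : |rest| ≤ (N:ℝ) * (θ^(j+1) * m * (N.factorial : ℝ) * (1+A)^N) := by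
      refine le_trans (Finset.abs_sum_le_sum_abs _ _) ?_
      have hcard : ((Finset.range (N+1)).erase j).card = N := by
        rw [Finset.card_erase_of_mem hjmem, Finset.card_range]
        omega
      calc ∑ i ∈ (Finset.range (N+1)).erase j, |c i * ((i.descFactorial j : ℕ) : ℝ) * x^(i-j)|
          ≤ ∑ _i ∈ (Finset.range (N+1)).erase j,
            (θ^(j+1) * m * (N.factorial : ℝ) * (1+A)^N) := by
            apply Finset.sum_le_sum
            intro i hi
            have hine : i ≠ j := Finset.ne_of_mem_erase hi
            have hirange : i ∈ Finset.range (N+1) := Finset.mem_of_mem_erase hi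
            have hiN : i ≤ N := Nat.lt_succ_iff.mp (Finset.mem_range.mp hirange)
            rcases lt_or_gt_of_ne hine with hlt | hgt'
            · have hz : i.descFactorial j = 0 := Nat.descFactorial_eq_zero_iff_lt.mpr hlt
              rw [hz]
              simp only [Nat.cast_zero, mul_zero, zero_mul, abs_zero]
              positivity
            · rw [abs_mul, abs_mul]
              have h1 : |c i| ≤ θ^(j+1) * m := by
                have h2 := (hgt i hirange hgt').le
                have h3 : θ^i ≤ θ^(j+1) := pow_le_pow_of_le_one hθ0.le hθ1 hgt'
                nlinarith [hm0]
              have h4 : |((i.descFactorial j : ℕ) : ℝ)| ≤ (N.factorial : ℝ) := by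
                rw [abs_of_nonneg (by positivity)]
                have hd1 : i.descFactorial j ≤ i.factorial := by
                  calc i.descFactorial j ≤ (i-j).factorial * i.descFactorial j :=
                        Nat.le_mul_of_pos_left _ (Nat.factorial_pos _)
                    _ = i.factorial := Nat.factorial_mul_descFactorial (le_of_lt hgt')
                exact_mod_cast le_trans hd1 (Nat.factorial_le hiN)
              have h5 : |x^(i-j)| ≤ (1+A)^N := by
                rw [abs_pow]
                calc |x|^(i-j) ≤ (1+A)^(i-j) := by
                      apply pow_le_pow_left₀ (abs_nonneg x)
                      linarith
                  _ ≤ (1+A)^N := by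
                      apply pow_le_pow_right₀ (by linarith)
                      omega
              have hc0 : 0 ≤ |c i| := abs_nonneg _
              have hd0 : 0 ≤ |((i.descFactorial j : ℕ) : ℝ)| := abs_nonneg _
              have hx0 : 0 ≤ |x^(i-j)| := abs_nonneg _
              calc |c i| * |((i.descFactorial j : ℕ) : ℝ)| * |x^(i-j)|
                  ≤ (θ^(j+1) * m) * (N.factorial : ℝ) * (1+A)^N := by
                    apply mul_le_mul (mul_le_mul h1 h4 hd0 (by positivity)) h5 hx0
                    positivity
                _ = θ^(j+1) * m * (N.factorial : ℝ) * (1+A)^N := by ring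
        _ = (N:ℝ) * (θ^(j+1) * m * (N.factorial : ℝ) * (1+A)^N) := by
            rw [Finset.sum_const, hcard, nsmul_eq_mul]
    -- combine
    have hmabs : θ^j * m ≤ |c j * (j.factorial : ℝ)| := by
      rw [abs_mul, abs_of_nonneg (by positivity : (0:ℝ) ≤ (j.factorial : ℝ))]
      have h6 : (1:ℝ) ≤ (j.factorial : ℝ) := by exact_mod_cast j.factorial_pos
      nlinarith [abs_nonneg (c j), mul_pos (pow_pos hθ0 j) hm0]
    have htri : |c j * (j.factorial : ℝ)| ≤ |c j * (j.factorial : ℝ) + rest| + |rest| := by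
      calc |c j * (j.factorial : ℝ)| = |(c j * (j.factorial : ℝ) + rest) - rest| := by ring_nf
        _ ≤ |c j * (j.factorial : ℝ) + rest| + |rest| := abs_sub _ _
    have hRb2 : (N:ℝ) * (θ^(j+1) * m * (N.factorial : ℝ) * (1+A)^N) ≤ θ^j * m * (1/2) := by
      have h7 : (N:ℝ) * (θ^(j+1) * m * (N.factorial : ℝ) * (1+A)^N)
          = (θ^j * m) * (θ * ((N:ℝ) * (N.factorial : ℝ) * (1+A)^N)) := by ring
      rw [h7]
      apply mul_le_mul_of_nonneg_left hθD (by positivity)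
    have hθjN : θ^N ≤ θ^j := pow_le_pow_of_le_one hθ0.le hθ1 hjN
    have h8 : θ^N * m ≤ θ^j * m := mul_le_mul_of_nonneg_right hθjN hm0.le
    linarith [hmabs, htri, hRb, hRb2, h8, le_of_eq hlam, ge_of_eq hlam]
  have hNR : (0:ℝ) < N := by exact_mod_cast hN
  have heN : (0:ℝ) < (1:ℝ)/N := by positivity
  have h3N : (0:ℝ) < 3^N := by positivity
  rcases lt_or_ge ε lam with hεl | hεl
  · rcases Nat.eq_zero_or_pos j with hj0 | hj1
    · have hempty : {x | x ∈ Icc (-A) A ∧ |p.eval x| ≤ ε} = ∅ := by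
        ext x
        simp only [Set.mem_setOf_eq, Set.mem_empty_iff_false, iff_false, not_and]
        intro hx1 hx2
        have hl := hlow x hx1
        rw [hj0] at hl
        simp only [Function.iterate_zero, id] at hl
        linarith
      rw [hempty]
      simp only [measure_empty]
      exact zero_le
    · refine le_trans (vdc j hj1 p (-A) A lam ε hlam0 hε hlow) ?_
      apply ENNReal.ofReal_le_ofReal
      have hbase : 0 < ε/lam := by positivity
      have hbase1 : ε/lam ≤ 1 := by rw [div_le_one hlam0]; linarith
      have hexp : (1:ℝ)/N ≤ 1/(j:ℝ) := by
        apply one_div_le_one_div_of_le (by exact_mod_cast hj1) (by exact_mod_cast hjN)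
      have h1 : (ε/lam) ^ ((1:ℝ)/(j:ℝ)) ≤ (ε/lam) ^ ((1:ℝ)/(N:ℝ)) :=
        Real.rpow_le_rpow_of_exponent_ge hbase hbase1 hexp
      have h2 : (3:ℝ)^j ≤ 3^N := pow_le_pow_right₀ (by norm_num) hjN
      have h3 : (ε/lam) ^ ((1:ℝ)/(N:ℝ)) = (1/lam)^((1:ℝ)/(N:ℝ)) * ε^((1:ℝ)/(N:ℝ)) := by
        rw [Real.div_rpow hε.le hlam0.le, Real.div_rpow (by norm_num) hlam0.le,
          Real.one_rpow]
        ring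
      have h4 : (0:ℝ) ≤ (ε/lam) ^ ((1:ℝ)/(j:ℝ)) := Real.rpow_nonneg hbase.le _
      have h5 : (0:ℝ) ≤ (ε/lam) ^ ((1:ℝ)/(N:ℝ)) := Real.rpow_nonneg hbase.le _
      calc (3:ℝ)^j * (ε/lam) ^ ((1:ℝ)/(j:ℝ))
          ≤ (3:ℝ)^N * (ε/lam) ^ ((1:ℝ)/(N:ℝ)) := by nlinarith
        _ = (3:ℝ)^N * ((1/lam)^((1:ℝ)/(N:ℝ)) * ε^((1:ℝ)/(N:ℝ))) := by rw [h3]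
        _ ≤ (3^N + 2*A) * (1/lam)^((1:ℝ)/(N:ℝ)) * ε^((1:ℝ)/(N:ℝ)) := by
            have h6 : (0:ℝ) ≤ (1/lam)^((1:ℝ)/(N:ℝ)) * ε^((1:ℝ)/(N:ℝ)) := by positivity
            nlinarith [hA]
  · refine le_trans (measure_mono (fun x hx => hx.1)) ?_
    rw [Real.volume_Icc]
    apply ENNReal.ofReal_le_ofReal
    have h1 : lam ^ ((1:ℝ)/(N:ℝ)) ≤ ε ^ ((1:ℝ)/(N:ℝ)) :=
      Real.rpow_le_rpow hlam0.le hεl heN.le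
    have h2 : (1/lam)^((1:ℝ)/(N:ℝ)) * lam^((1:ℝ)/(N:ℝ)) = 1 := by
      rw [← Real.mul_rpow (by positivity) hlam0.le, one_div_mul_cancel hlam0.ne',
        Real.one_rpow]
    have h3 : (0:ℝ) < (1/lam)^((1:ℝ)/(N:ℝ)) := Real.rpow_pos_of_pos (by positivity) _
    have h4 := mul_le_mul_of_nonneg_left h1 h3.le
    nlinarith [h4, h2, h3, hA, h3N, Real.rpow_nonneg hε.le ((1:ℝ)/(N:ℝ))]


lemma iterWithin_eq {f : ℝ → ℝ} (hf : ContDiff ℝ (⊤ : ℕ∞) f) {s : Set ℝ}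
    (hs : UniqueDiffOn ℝ s) {x : ℝ} (hx : x ∈ s) (m : ℕ) :
    iteratedDerivWithin m f s x = iteratedDeriv m f x := by
  have h1 : HasFTaylorSeriesUpTo (⊤:ℕ∞) f (ftaylorSeries ℝ f) :=
    contDiff_iff_ftaylorSeries.mp (hf.of_le (by simp))
  have h2 : HasFTaylorSeriesUpToOn (⊤:ℕ∞) f (ftaylorSeries ℝ f) s :=
    (hasFTaylorSeriesUpToOn_univ_iff.mpr h1).mono (Set.subset_univ s)
  have hmn : ((m:ℕ∞) : WithTop ℕ∞) ≤ (((⊤:ℕ∞) : WithTop ℕ∞)) := by exact_mod_cast le_top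
  have h3 := h2.eq_iteratedFDerivWithin_of_uniqueDiffOn (m := m) hmn hs hx
  rw [iteratedDerivWithin_eq_iteratedFDerivWithin, iteratedDeriv_eq_iteratedFDeriv, ← h3]
  rfl

lemma iteratedDeriv_mul_const (f : ℝ → ℝ) (hf : ContDiff ℝ (⊤ : ℕ∞) f) (c : ℝ) (k : ℕ) (x : ℝ) :
    iteratedDeriv k (fun v => f v * c) x = (iteratedDeriv k f x) * c := by
  have h1 : (fun v => f v * c) = fun v => c * f v := funext fun v => mul_comm _ _
  rw [h1, ← iteratedDerivWithin_univ, ← iteratedDerivWithin_univ,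
    iteratedDerivWithin_const_mul (Set.mem_univ x) uniqueDiffOn_univ c
      ((hf.of_le (by exact_mod_cast le_top) : ContDiff ℝ k f).contDiffWithinAt)]
  ring

lemma iteratedDeriv_fin_sum {ι : Type*} (s : Finset ι) (f : ι → ℝ → ℝ)
    (hf : ∀ i, ContDiff ℝ (⊤ : ℕ∞) (f i)) (k : ℕ) (x : ℝ) :
    iteratedDeriv k (fun v => ∑ i ∈ s, f i v) x = ∑ i ∈ s, iteratedDeriv k (f i) x := by
  induction s using Finset.cons_induction with
  | empty =>
    simp only [Finset.sum_empty]
    rw [show (fun _ : ℝ => (0:ℝ)) = fun _ => (0:ℝ)*(0:ℝ) by funext; ring]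
    rw [iteratedDeriv_mul_const (fun _ => (0:ℝ)) contDiff_const 0 k x]
    ring
  | cons i s his ih =>
    simp only [Finset.sum_cons]
    have hsum : ContDiff ℝ (k:ℕ) (fun v => ∑ j ∈ s, f j v) :=
      ContDiff.sum fun j _ => (hf j).of_le (by exact_mod_cast le_top)
    rw [← iteratedDerivWithin_univ, ← iteratedDerivWithin_univ]
    rw [show (fun v => f i v + ∑ j ∈ s, f j v)
        = ((fun v => f i v) + fun v => ∑ j ∈ s, f j v) from rfl]
    rw [iteratedDerivWithin_add (Set.mem_univ x) uniqueDiffOn_univ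
      (((hf i).of_le (by exact_mod_cast le_top) : ContDiff ℝ k (f i)).contDiffWithinAt) hsum.contDiffWithinAt]
    rw [iteratedDerivWithin_univ, iteratedDerivWithin_univ, ih]

lemma taylor_zero_bound (g : ℝ → ℝ) (hg : ContDiff ℝ (⊤ : ℕ∞) g) (n : ℕ) (A B : ℝ) (hA : 0 < A)
    (hz : ∀ k, k ≤ n → iteratedDeriv k g 0 = 0)
    (hB : ∀ y ∈ Icc (0:ℝ) A, |iteratedDeriv (n+1) g y| ≤ B) :
    ∀ v ∈ Icc (0:ℝ) A, |g v| ≤ B * v^(n+1) := by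
  intro v hv
  have hun : UniqueDiffOn ℝ (Icc (0:ℝ) A) := uniqueDiffOn_Icc hA
  have h0 : (0:ℝ) ∈ Icc (0:ℝ) A := ⟨le_refl 0, hA.le⟩
  have hcd : ContDiffOn ℝ (n+1) g (Icc (0:ℝ) A) :=
    (hg.of_le (by exact_mod_cast le_top) : ContDiff ℝ (n+1) g).contDiffOn
  have hC : ∀ y ∈ Icc (0:ℝ) A, ‖iteratedDerivWithin (n+1) g (Icc (0:ℝ) A) y‖ ≤ B := by
    intro y hy
    rw [iterWithin_eq hg hun hy, Real.norm_eq_abs]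
    exact hB y hy
  have hrem := taylor_mean_remainder_bound hA.le hcd hv hC
  have hT : taylorWithinEval g n (Icc (0:ℝ) A) 0 v = 0 := by
    rw [taylor_within_apply]
    apply Finset.sum_eq_zero
    intro k hk
    rw [iterWithin_eq hg hun h0, hz k (Nat.lt_succ_iff.mp (Finset.mem_range.mp hk))]
    simp
  rw [hT, sub_zero, Real.norm_eq_abs, sub_zero] at hrem
  have hB0 : (0:ℝ) ≤ B := le_trans (abs_nonneg _) (hB 0 h0)
  have hfact : (1:ℝ) ≤ (n.factorial : ℝ) := by exact_mod_cast n.factorial_pos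
  calc |g v| ≤ B * v^(n+1) / n.factorial := hrem
    _ ≤ B * v^(n+1) := by
        rw [div_le_iff₀ (by positivity)]
        nlinarith [mul_le_mul_of_nonneg_left hfact (mul_nonneg hB0 (pow_nonneg hv.1 (n+1)))]

lemma part_two (N : ℕ) (hN : 1 ≤ N) (A : ℝ) (hA : 0 < A)
    (a : ℝ → Fin N → ℝ) (ha : ContDiff ℝ (⊤ : ℕ∞) a) (α C : ℝ) (hα : 0 < α) (hC : 0 < C)
    (H : ∀ (u : ℝ) (σ : Fin N → ℝ), u ^ 2 + ∑ i, σ i ^ 2 = 1 → ∀ ε : ℝ, 0 < ε →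
      volume {v : ℝ | v ∈ Set.Icc (-A) A ∧ |(∑ i, a v i * σ i) - u| ≤ ε} ≤
        ENNReal.ofReal (C * ε ^ α)) : α ≤ 1 / N := by
  by_contra hcon
  push_neg at hcon
  have hNR : (0:ℝ) < N := by exact_mod_cast hN
  have hai : ∀ i, ContDiff ℝ (⊤ : ℕ∞) (fun v => a v i) := fun i => contDiff_pi.mp ha i
  -- find σ orthogonal to the first N-1 derivative vectors at 0
  obtain ⟨σ, hσne, horthm⟩ : ∃ σ : Fin N → ℝ, σ ≠ 0 ∧
      ∀ k : Fin (N-1), ∑ i, iteratedDeriv ((k:ℕ)+1) (fun v => a v i) 0 * σ i = 0 := by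
    set M : Matrix (Fin (N-1)) (Fin N) ℝ :=
      fun k i => iteratedDeriv ((k:ℕ)+1) (fun v => a v i) 0 with hM
    have hker : LinearMap.ker M.mulVecLin ≠ ⊥ := by
      apply LinearMap.ker_ne_bot_of_finrank_lt
      simp only [Module.finrank_pi, Fintype.card_fin]
      omega
    obtain ⟨σ, hσmem, hσne⟩ := (Submodule.ne_bot_iff _).mp hker
    refine ⟨σ, hσne, fun k => ?_⟩
    have h1 : M.mulVec σ = 0 := LinearMap.mem_ker.mp hσmem
    have h2 := congrFun h1 k
    simpa [Matrix.mulVec, dotProduct, hM] using h2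
  have horth : ∀ k : ℕ, 1 ≤ k → k < N →
      ∑ i, iteratedDeriv k (fun v => a v i) 0 * σ i = 0 := by
    intro k hk1 hkN
    have hlt : k - 1 < N - 1 := by omega
    have := horthm ⟨k-1, hlt⟩
    simpa [Nat.sub_add_cancel hk1] using this
  -- normalization
  set s : ℝ := ∑ i, a 0 i * σ i with hs
  have hσsq : 0 < ∑ i, σ i ^ 2 := by
    obtain ⟨i, hi⟩ := Function.ne_iff.mp hσne
    apply Finset.sum_pos' (fun j _ => sq_nonneg _)
    have habs := abs_pos.mpr hi
    exact ⟨i, Finset.mem_univ i, by nlinarith [sq_abs (σ i)]⟩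
  set Q : ℝ := s^2 + ∑ i, σ i ^ 2 with hQdef
  have hQ : 0 < Q := by positivity
  set t : ℝ := (Real.sqrt Q)⁻¹ with ht
  have ht0 : 0 < t := inv_pos.mpr (Real.sqrt_pos.mpr hQ)
  have ht2 : t^2 = Q⁻¹ := by
    rw [ht, ← Real.sqrt_inv, Real.sq_sqrt (by positivity)]
  set u : ℝ := t * s with hu
  set σ' : Fin N → ℝ := fun i => t * σ i with hσ'
  have hnorm : u ^ 2 + ∑ i, σ' i ^ 2 = 1 := by
    have h1 : ∑ i, σ' i ^ 2 = t^2 * ∑ i, σ i ^ 2 := by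
      rw [Finset.mul_sum]
      apply Finset.sum_congr rfl
      intro i _
      rw [hσ']
      ring
    rw [h1, hu, mul_pow, ht2]
    rw [hQdef] at hQ ⊢
    field_simp
  set g : ℝ → ℝ := fun v => (∑ i, a v i * σ' i) - u with hg
  have hgsmooth : ContDiff ℝ (⊤ : ℕ∞) g := by
    apply ContDiff.sub _ contDiff_const
    exact ContDiff.sum fun i _ => (hai i).mul contDiff_const
  have hg0 : g 0 = 0 := by
    rw [hg]
    simp only
    have h1 : ∑ i, a 0 i * σ' i = t * ∑ i, a 0 i * σ i := by
      rw [Finset.mul_sum]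
      apply Finset.sum_congr rfl
      intro i _
      rw [hσ']
      ring
    rw [h1, hu, ← hs]
    ring
  have hgk : ∀ k, k ≤ N - 1 → iteratedDeriv k g 0 = 0 := by
    intro k hk
    rcases Nat.eq_zero_or_pos k with rfl | hk1
    · simpa using hg0
    · have h1 : g = fun z => -u + ∑ i, a z i * σ' i := by
        funext z
        rw [hg]
        ring
      rw [h1, ← iteratedDerivWithin_univ,
        iteratedDerivWithin_const_add hk1,
        iteratedDerivWithin_univ]
      rw [iteratedDeriv_fin_sum Finset.univ (fun i v => a v i * σ' i)
        (fun i => (hai i).mul contDiff_const) k 0]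
      have h2 : ∀ i : Fin N, iteratedDeriv k (fun v => a v i * σ' i) 0
          = iteratedDeriv k (fun v => a v i) 0 * σ' i :=
        fun i => iteratedDeriv_mul_const _ (hai i) _ k 0
      rw [Finset.sum_congr rfl (fun i _ => h2 i)]
      have h3 : ∑ i, iteratedDeriv k (fun v => a v i) 0 * σ' i
          = t * ∑ i, iteratedDeriv k (fun v => a v i) 0 * σ i := by
        rw [Finset.mul_sum]
        apply Finset.sum_congr rfl
        intro i _
        rw [hσ']
        ring
      rw [h3, horth k hk1 (by omega)]
      ring
  -- bound on the N-th derivative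
  obtain ⟨B, hB⟩ : ∃ B, ∀ y ∈ Icc (-A) A, |iteratedDeriv N g y| ≤ B := by
    obtain ⟨B, hB⟩ := (isCompact_Icc (a := -A) (b := A)).exists_bound_of_continuousOn
      ((hgsmooth.continuous_iteratedDeriv N (by exact_mod_cast le_top)).continuousOn)
    exact ⟨B, fun y hy => by simpa using hB y hy⟩
  set M : ℝ := max B 1 with hMdef
  have hM0 : 0 < M := lt_of_lt_of_le one_pos (le_max_right B 1)
  have hBM : ∀ y ∈ Icc (-A) A, |iteratedDeriv N g y| ≤ M :=
    fun y hy => le_trans (hB y hy) (le_max_left B 1)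
  have hNsucc : N - 1 + 1 = N := Nat.succ_pred_eq_of_pos hN
  -- two-sided Taylor bound
  have htay : ∀ v ∈ Icc (-A) A, |g v| ≤ M * |v| ^ N := by
    have hright := taylor_zero_bound g hgsmooth (N-1) A M hA hgk
      (fun y hy => by
        rw [hNsucc]
        exact hBM y ⟨by linarith [hy.1], hy.2⟩)
    set g2 : ℝ → ℝ := fun x => g (-x) with hg2
    have hg2smooth : ContDiff ℝ (⊤ : ℕ∞) g2 := hgsmooth.comp contDiff_neg
    have hg2k : ∀ k, k ≤ N - 1 → iteratedDeriv k g2 0 = 0 := by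
      intro k hk
      rw [hg2]
      rw [iteratedDeriv_comp_neg k g 0]
      rw [neg_zero, hgk k hk]
      simp
    have hg2N : ∀ y, iteratedDeriv N g2 y = (-1:ℝ)^N • iteratedDeriv N g (-y) :=
      fun y => iteratedDeriv_comp_neg N g y
    have hleft := taylor_zero_bound g2 hg2smooth (N-1) A M hA hg2k
      (fun y hy => by
        rw [hNsucc, hg2N y]
        have : -y ∈ Icc (-A) A := ⟨by linarith [hy.2], by linarith [hy.1]⟩
        calc |(-1:ℝ)^N • iteratedDeriv N g (-y)|
            = |iteratedDeriv N g (-y)| := by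
              rw [smul_eq_mul, abs_mul, abs_pow, abs_neg, abs_one, one_pow, one_mul]
          _ ≤ M := hBM _ this)
    intro v hv
    rcases le_or_gt 0 v with hv0 | hv0
    · have := hright v ⟨hv0, hv.2⟩
      rw [hNsucc] at this
      rwa [abs_of_nonneg hv0]
    · have hmv : -v ∈ Icc (0:ℝ) A := ⟨by linarith, by linarith [hv.1]⟩
      have := hleft (-v) hmv
      rw [hNsucc] at this
      rw [hg2] at this
      simp only [neg_neg] at this
      rwa [abs_of_neg hv0]
  -- derive the contradiction
  set β : ℝ := α - 1/N with hβ
  have hβ0 : 0 < β := by rw [hβ]; linarith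
  set K : ℝ := C * M ^ ((1:ℝ)/N) / 2 with hK
  have hK0 : 0 < K := by positivity
  set P : ℝ := (1/(2*K)) ^ ((1:ℝ)/β) with hP
  have hP0 : 0 < P := Real.rpow_pos_of_pos (by positivity) _
  set ε : ℝ := min (min 1 (M * A^N)) P with hεdef
  have hε : 0 < ε := lt_min (lt_min one_pos (by positivity)) hP0
  have hε1 : ε ≤ M * A^N := le_trans (min_le_left _ _) (min_le_right _ _)
  have hεP : ε ≤ P := min_le_right _ _
  have hNne : (N:ℝ) ≠ 0 := hNR.ne'
  set r : ℝ := (ε/M) ^ ((1:ℝ)/N) with hr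
  have hr0 : 0 < r := Real.rpow_pos_of_pos (by positivity) _
  have hrN : r ^ N = ε / M := by
    rw [hr, ← Real.rpow_natCast ((ε/M) ^ ((1:ℝ)/N)) N, ← Real.rpow_mul (by positivity)]
    rw [one_div, inv_mul_cancel₀ hNne, Real.rpow_one]
  have hrA : r ≤ A := by
    have h1 : ε / M ≤ A^N := by
      rw [div_le_iff₀ hM0]
      linarith [hε1]
    calc r = (ε/M) ^ ((1:ℝ)/N) := hr
      _ ≤ (A^N) ^ ((1:ℝ)/N) := Real.rpow_le_rpow (by positivity) h1 (by positivity)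
      _ = A := by
          rw [← Real.rpow_natCast A N, ← Real.rpow_mul hA.le, mul_one_div,
            div_self hNne, Real.rpow_one]
  have hsubset : Icc (-r) r ⊆
      {v : ℝ | v ∈ Icc (-A) A ∧ |(∑ i, a v i * σ' i) - u| ≤ ε} := by
    intro v hv
    have hvr : |v| ≤ r := abs_le.mpr ⟨hv.1, hv.2⟩
    have hvA : v ∈ Icc (-A) A := ⟨by linarith [hv.1, hrA], by linarith [hv.2, hrA]⟩
    refine ⟨hvA, ?_⟩
    have h2 := htay v hvA
    have h3 : |v|^N ≤ r^N := pow_le_pow_left₀ (abs_nonneg v) hvr N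
    calc |(∑ i, a v i * σ' i) - u| = |g v| := rfl
      _ ≤ M * |v|^N := h2
      _ ≤ M * (ε/M) := by
          rw [← hrN]
          exact mul_le_mul_of_nonneg_left h3 hM0.le
      _ = ε := by field_simp
  have hvol := H u σ' hnorm ε hε
  have h2r : ENNReal.ofReal (2*r) ≤ ENNReal.ofReal (C * ε ^ α) := by
    calc ENNReal.ofReal (2*r) = volume (Icc (-r) r) := by
          rw [Real.volume_Icc]
          congr 1
          ring
      _ ≤ _ := le_trans (measure_mono hsubset) hvol
  have hreal : 2*r ≤ C * ε^α := (ENNReal.ofReal_le_ofReal_iff (by positivity)).mp h2r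
  have hεN : (0:ℝ) < ε ^ ((1:ℝ)/N) := Real.rpow_pos_of_pos hε _
  have hM1N : (0:ℝ) < M ^ ((1:ℝ)/N) := Real.rpow_pos_of_pos hM0 _
  have hsplit : r = ε^((1:ℝ)/N) / M^((1:ℝ)/N) := by
    rw [hr, Real.div_rpow hε.le hM0.le]
  have hαsum : ε ^ α = ε^((1:ℝ)/N) * ε^β := by
    rw [← Real.rpow_add hε]
    congr 1
    rw [hβ]
    ring
  have hPβ : ε^β ≤ 1/(2*K) := by
    calc ε^β ≤ P^β := Real.rpow_le_rpow hε.le hεP hβ0.le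
      _ = 1/(2*K) := by
          rw [hP, ← Real.rpow_mul (by positivity), one_div β, inv_mul_cancel₀ hβ0.ne',
            Real.rpow_one]
  rw [hsplit, hαsum] at hreal
  have h5 : 2 * ε^((1:ℝ)/N) ≤ C * (ε^((1:ℝ)/N) * ε^β) * M^((1:ℝ)/N) := by
    rw [← div_le_iff₀ hM1N]
    calc 2 * ε^((1:ℝ)/N) / M^((1:ℝ)/N) = 2 * (ε^((1:ℝ)/N) / M^((1:ℝ)/N)) := by ring
      _ ≤ C * (ε^((1:ℝ)/N) * ε^β) := hreal
  have h2K : 2*K = C * M^((1:ℝ)/N) := by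
    rw [hK]
    ring
  have hcm : (0:ℝ) < C * M^((1:ℝ)/N) := by positivity
  rw [h2K] at hPβ
  have h6 : ε^β * (C * M^((1:ℝ)/N)) ≤ 1 := (le_div_iff₀ hcm).mp hPβ
  have h8 := mul_le_mul_of_nonneg_right h6 hεN.le
  nlinarith [h5, h8, hεN]


theorem stmt_15 (N : ℕ) (hN : 1 ≤ N) (A : ℝ) (hA : 0 < A) :
    (∃ a : ℝ → Fin N → ℝ, ContDiff ℝ (⊤ : ℕ∞) a ∧ ∃ C : ℝ, 0 < C ∧
      ∀ (u : ℝ) (σ : Fin N → ℝ), u ^ 2 + ∑ i, σ i ^ 2 = 1 → ∀ ε : ℝ, 0 < ε →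
        volume {v : ℝ | v ∈ Set.Icc (-A) A ∧ |(∑ i, a v i * σ i) - u| ≤ ε} ≤
          ENNReal.ofReal (C * ε ^ ((1 : ℝ) / N))) ∧
    (∀ a : ℝ → Fin N → ℝ, ContDiff ℝ (⊤ : ℕ∞) a → ∀ α C : ℝ, 0 < α → 0 < C →
      (∀ (u : ℝ) (σ : Fin N → ℝ), u ^ 2 + ∑ i, σ i ^ 2 = 1 → ∀ ε : ℝ, 0 < ε →
        volume {v : ℝ | v ∈ Set.Icc (-A) A ∧ |(∑ i, a v i * σ i) - u| ≤ ε} ≤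
          ENNReal.ofReal (C * ε ^ α)) →
      α ≤ 1 / N) := by
  constructor
  · refine ⟨fun v i => v^((i:ℕ)+1), contDiff_pi.mpr fun i => contDiff_id.pow _,
      ((3:ℝ)^N + 2*A) *
        (1/((1/(2*(N:ℝ)*(N.factorial)*(1+A)^N + 1))^N * (1/((N:ℝ)+1)) / 2)) ^ ((1:ℝ)/N),
      by positivity, ?_⟩
    intro u σ hsum ε hε
    have h := part_one N hN A hA u σ hsum ε hε
    convert h using 3
  · intro a ha α C hα hC H
    exact part_two N hN A hA a ha α C hα hC H
end

section
/- Let N ≥ 1 be an integer, A > 0, and let a : ℝ^N → ℝ^N be a smooth (C^∞) map whose differential Da(v) is invertible at every v ∈ ℝ^N (for instance, a a global diffeomorphism of ℝ^N). Then there exists a constant C > 0 such that for every (u,σ) ∈ ℝ × ℝ^N with u² + ‖σ‖² = 1 and every ε > 0, meas{ v ∈ [−A,A]^N : |a(v)·σ − u| ≤ ε } ≤ C·ε. (Hence for equal space and velocity dimensions the non-degeneracy measure condition holds with the best exponent α = 1.) -/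
open MeasureTheory
open scoped ENNReal

set_option maxHeartbeats 1000000

theorem stmt_16 (N : ℕ) (hN : 1 ≤ N) (A : ℝ) (hA : 0 < A)
    (a : (Fin N → ℝ) → (Fin N → ℝ)) (ha : ContDiff ℝ (⊤ : ℕ∞) a)
    (hDa : ∀ v, Function.Bijective (fderiv ℝ a v)) :
    ∃ C : ℝ, 0 < C ∧ ∀ (u : ℝ) (σ : Fin N → ℝ), u ^ 2 + ∑ i, σ i ^ 2 = 1 →
      ∀ ε : ℝ, 0 < ε →
      volume {v : Fin N → ℝ | (∀ i, v i ∈ Set.Icc (-A) A) ∧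
          |(∑ i, a v i * σ i) - u| ≤ ε} ≤
        ENNReal.ofReal (C * ε) := by
  classical
  have hNR : (1 : ℝ) ≤ N := by exact_mod_cast hN
  have hdiff : Differentiable ℝ a := ha.differentiable (by simp)
  have haC : Continuous a := ha.continuous
  set K : Set (Fin N → ℝ) := Set.univ.pi (fun _ => Set.Icc (-A) A) with hK
  have hKc : IsCompact K := isCompact_univ_pi fun _ => isCompact_Icc
  have hK0 : (0 : Fin N → ℝ) ∈ K := by
    rw [hK, Set.mem_univ_pi]
    intro j
    simp only [Pi.zero_apply, Set.mem_Icc]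
    constructor <;> linarith
  -- bound on a over K
  obtain ⟨R0, hR0⟩ := hKc.exists_bound_of_continuousOn haC.continuousOn
  set R : ℝ := max R0 1 with hRdef
  have hR1 : (1 : ℝ) ≤ R := le_max_right _ _
  have hRpos : (0 : ℝ) < R := lt_of_lt_of_le one_pos hR1
  have hRb : ∀ v ∈ K, ∀ i, |a v i| ≤ R := by
    intro v hv i
    have h1 : ‖a v i‖ ≤ ‖a v‖ := norm_le_pi_norm (a v) i
    have h2 : ‖a v‖ ≤ R0 := hR0 v hv
    calc |a v i| = ‖a v i‖ := (Real.norm_eq_abs _).symm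
      _ ≤ R0 := le_trans h1 h2
      _ ≤ R := le_max_left _ _
  -- lower bound on the Jacobian determinant over K
  set φ : (Fin N → ℝ) → ℝ := fun v => (fderiv ℝ a v).det with hφ
  have hφcont : Continuous φ :=
    ContinuousLinearMap.continuous_det.comp (ha.continuous_fderiv (by simp))
  have hφne : ∀ v, φ v ≠ 0 := by
    intro v
    have hb : Function.Bijective ((fderiv ℝ a v : (Fin N → ℝ) →ₗ[ℝ] (Fin N → ℝ))) := hDa v
    have := (LinearEquiv.ofBijective _ hb).isUnit_det'
    exact this.ne_zero
  obtain ⟨x₀, hx₀K, hx₀min⟩ := hKc.exists_isMinOn ⟨0, hK0⟩ hφcont.abs.continuousOn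
  set c : ℝ := |φ x₀| with hc
  have hcpos : (0 : ℝ) < c := abs_pos.2 (hφne x₀)
  have hcle : ∀ v ∈ K, c ≤ |φ v| := fun v hv => hx₀min hv
  -- local injectivity covering
  have hcov : ∀ x : Fin N → ℝ, ∃ U : Set (Fin N → ℝ), IsOpen U ∧ x ∈ U ∧ Set.InjOn a U := by
    intro x
    have hb : Function.Bijective ((fderiv ℝ a x : (Fin N → ℝ) →ₗ[ℝ] (Fin N → ℝ))) := hDa x
    let e : (Fin N → ℝ) ≃L[ℝ] (Fin N → ℝ) :=
      (LinearEquiv.ofBijective _ hb).toContinuousLinearEquiv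
    have hfd : HasFDerivAt a (e : (Fin N → ℝ) →L[ℝ] (Fin N → ℝ)) x := by
      have h1 : (e : (Fin N → ℝ) →L[ℝ] (Fin N → ℝ)) = fderiv ℝ a x := by
        ext w; rfl
      rw [h1]; exact (hdiff x).hasFDerivAt
    let P := (ha.contDiffAt).toOpenPartialHomeomorph a hfd (by simp)
    refine ⟨P.source, P.open_source,
      ContDiffAt.mem_toOpenPartialHomeomorph_source _ hfd (by simp), ?_⟩
    have h2 := P.injOn
    rwa [show (⇑P : (Fin N → ℝ) → (Fin N → ℝ)) = a from rfl] at h2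
  choose U hUopen hUmem hUinj using hcov
  obtain ⟨t, -, htcov⟩ :=
    hKc.elim_nhds_subcover U (fun x _ => (hUopen x).mem_nhds (hUmem x))
  -- constants
  set η : ℝ := 1 / (4 * N * (R + 1)) with hη
  have hηpos : (0 : ℝ) < η := by
    apply div_pos one_pos
    positivity
  set D : ℝ := 2 * (2 * R) ^ (N - 1) / η with hD
  have hDpos : (0 : ℝ) < D := by
    apply div_pos _ hηpos
    positivity
  set C₁ : ℝ := (t.card + 1) * D / c with hC₁
  have hC₁pos : (0 : ℝ) < C₁ := by
    apply div_pos _ hcpos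
    positivity
  set C : ℝ := max (4 * (2 * A) ^ N) C₁ with hC
  have hCpos : (0 : ℝ) < C := lt_of_lt_of_le hC₁pos (le_max_right _ _)
  refine ⟨C, hCpos, ?_⟩
  intro u σ hσ ε hε
  set S : Set (Fin N → ℝ) := {v : Fin N → ℝ | (∀ i, v i ∈ Set.Icc (-A) A) ∧
      |(∑ i, a v i * σ i) - u| ≤ ε} with hS
  have hSK : S ⊆ K := by
    intro v hv j _
    exact hv.1 j
  have hScl : IsClosed S := by
    have h1 : IsClosed {v : Fin N → ℝ | ∀ i, v i ∈ Set.Icc (-A) A} := by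
      have : {v : Fin N → ℝ | ∀ i, v i ∈ Set.Icc (-A) A} = K := by
        ext v
        rw [Set.mem_setOf_eq, hK, Set.mem_univ_pi]
      rw [this]
      exact hKc.isClosed
    have h2 : Continuous fun v : Fin N → ℝ => |(∑ i, a v i * σ i) - u| := by
      apply Continuous.abs
      apply Continuous.sub _ continuous_const
      exact continuous_finset_sum _ fun i _ =>
        ((continuous_apply i).comp haC).mul continuous_const
    exact h1.inter (isClosed_le h2 continuous_const)
  have hSm : MeasurableSet S := hScl.measurableSet
  by_cases hcase : ∃ i, η ≤ |σ i|
  · -- main case : some coordinate of σ is not small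
    obtain ⟨i, hi⟩ := hcase
    have hσi : σ i ≠ 0 := by
      intro h0
      rw [h0, abs_zero] at hi
      linarith
    -- the linear map sending w to (w with i-th coordinate replaced by σ ⬝ w)
    set B : Matrix (Fin N) (Fin N) ℝ :=
      1 + Matrix.replicateCol (Fin 1) (Pi.single i (1:ℝ)) * Matrix.replicateRow (Fin 1) (σ - Pi.single i (1:ℝ))
      with hB
    have hBdet : B.det = σ i := by
      rw [hB]; erw [Matrix.det_one_add_replicateCol_mul_replicateRow]
      simp [dotProduct, Pi.single_apply]
    set L : (Fin N → ℝ) →ₗ[ℝ] (Fin N → ℝ) := Matrix.toLin' B with hL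
    have hLdet : LinearMap.det L = σ i := by rw [hL, LinearMap.det_toLin']; exact hBdet
    have hLapp : ∀ (w : Fin N → ℝ) (j : Fin N),
        L w j = w j + (Pi.single i 1 : Fin N → ℝ) j * ((∑ c, σ c * w c) - w i) := by
      intro w j
      rw [hL, Matrix.toLin'_apply, hB]
      rw [Matrix.add_mulVec, Matrix.one_mulVec]
      simp only [Pi.add_apply]
      congr 1
      rw [← Matrix.mulVec_mulVec]
      simp [Matrix.mulVec, dotProduct, Matrix.replicateCol_apply, Matrix.replicateRow_apply,
        Finset.sum_sub_distrib, Pi.single_apply, sub_mul]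
    set rect : Set (Fin N → ℝ) :=
      Set.univ.pi fun j => if j = i then Set.Icc (u - ε) (u + ε) else Set.Icc (-R) R with hrect
    have hvol : volume (L ⁻¹' rect) = ENNReal.ofReal |(σ i)⁻¹| * volume rect := by
      rw [← hLdet]
      exact Measure.addHaar_preimage_linearMap volume (by rw [hLdet]; exact hσi) rect
    have hvrect : volume rect =
        ENNReal.ofReal (ε + ε) * ENNReal.ofReal (R + R) ^ (N - 1) := by
      rw [hrect, volume_pi_pi]
      rw [← Finset.mul_prod_erase Finset.univ _ (Finset.mem_univ i)]
      simp only [eq_self_iff_true, if_true]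
      rw [Real.volume_Icc]
      congr 1
      · congr 1; ring
      · rw [Finset.prod_congr rfl (fun j hj => ?_), Finset.prod_const,
          Finset.card_erase_of_mem (Finset.mem_univ i), Finset.card_univ, Fintype.card_fin]
        rw [if_neg (Finset.ne_of_mem_erase hj), Real.volume_Icc]
        congr 1; ring
    -- image of each piece is inside L ⁻¹' rect
    have himg : a '' S ⊆ L ⁻¹' rect := by
      rintro w ⟨v, hv, rfl⟩
      intro j _
      rw [hLapp]
      dsimp only
      by_cases hj : j = i
      · subst hj
        rw [Pi.single_eq_same]
        simp only [if_pos rfl]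
        have h1 : |(∑ c, a v c * σ c) - u| ≤ ε := hv.2
        have h2 : (∑ c, σ c * a v c) = ∑ c, a v c * σ c := by
          exact Finset.sum_congr rfl fun c _ => mul_comm _ _
        rw [one_mul, h2]
        constructor
        · have := abs_le.1 h1
          linarith [this.1]
        · have := abs_le.1 h1
          linarith [this.2]
      · rw [Pi.single_eq_of_ne hj, if_neg hj, zero_mul, add_zero]
        have := abs_le.1 (hRb v (hSK hv) j)
        exact ⟨this.1, this.2⟩
    -- volume of the preimage slab
    have hslab : volume (L ⁻¹' rect) ≤ ENNReal.ofReal (D * ε) := by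
      rw [hvol, hvrect]
      have h1 : |(σ i)⁻¹| ≤ η⁻¹ := by
        rw [abs_inv]
        exact inv_anti₀ hηpos hi
      calc ENNReal.ofReal |(σ i)⁻¹| *
            (ENNReal.ofReal (ε + ε) * ENNReal.ofReal (R + R) ^ (N - 1))
          ≤ ENNReal.ofReal η⁻¹ *
            (ENNReal.ofReal (ε + ε) * ENNReal.ofReal (R + R) ^ (N - 1)) := by
            exact mul_le_mul_left (ENNReal.ofReal_le_ofReal h1) _
        _ = ENNReal.ofReal (η⁻¹ * ((ε + ε) * (R + R) ^ (N - 1))) := by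
            rw [← ENNReal.ofReal_pow (by linarith), ← ENNReal.ofReal_mul (by linarith),
              ← ENNReal.ofReal_mul (by positivity)]
        _ = ENNReal.ofReal (D * ε) := by
            congr 1
            rw [hD]
            field_simp
            ring
    -- per covering piece estimate
    have hpiece : ∀ x ∈ t, volume (S ∩ U x) ≤ (ENNReal.ofReal c)⁻¹ * ENNReal.ofReal (D * ε) := by
      intro x _
      have hsm : MeasurableSet (S ∩ U x) := hSm.inter (hUopen x).measurableSet
      have h1 : ENNReal.ofReal c * volume (S ∩ U x) ≤ volume (a '' (S ∩ U x)) := by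
        calc ENNReal.ofReal c * volume (S ∩ U x)
            = ∫⁻ _ in S ∩ U x, ENNReal.ofReal c := (setLIntegral_const _ _).symm
          _ ≤ ∫⁻ v in S ∩ U x, ENNReal.ofReal |(fderiv ℝ a v).det| := by
              apply setLIntegral_mono
              · exact (ENNReal.measurable_ofReal.comp (hφcont.abs.measurable))
              · intro v hv
                exact ENNReal.ofReal_le_ofReal (hcle v (hSK hv.1))
          _ ≤ volume (a '' (S ∩ U x)) := by
              apply lintegral_abs_det_fderiv_le_addHaar_image volume hsm
              · intro v _
                exact (hdiff v).hasFDerivAt.hasFDerivWithinAt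
              · exact (hUinj x).mono Set.inter_subset_right
      have h2 : volume (a '' (S ∩ U x)) ≤ ENNReal.ofReal (D * ε) :=
        le_trans (measure_mono (le_trans (Set.image_mono Set.inter_subset_left) himg))
          hslab
      have hc0 : ENNReal.ofReal c ≠ 0 := by
        simp [ENNReal.ofReal_eq_zero, not_le, hcpos]
      have hctop : ENNReal.ofReal c ≠ ⊤ := ENNReal.ofReal_ne_top
      rw [mul_comm] at h1
      rw [← ENNReal.le_div_iff_mul_le (Or.inl hc0) (Or.inl hctop)] at h1
      calc volume (S ∩ U x) ≤ volume (a '' (S ∩ U x)) / ENNReal.ofReal c := h1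
        _ ≤ ENNReal.ofReal (D * ε) / ENNReal.ofReal c := by gcongr
        _ = (ENNReal.ofReal c)⁻¹ * ENNReal.ofReal (D * ε) := by
            rw [ENNReal.div_eq_inv_mul]
    -- summing up
    have hcover : S ⊆ ⋃ x ∈ t, S ∩ U x := by
      intro v hv
      obtain ⟨x, hx, hvx⟩ := Set.mem_iUnion₂.1 (htcov (hSK hv))
      exact Set.mem_iUnion₂.2 ⟨x, hx, hv, hvx⟩
    calc volume S ≤ volume (⋃ x ∈ t, S ∩ U x) := measure_mono hcover
      _ ≤ ∑ x ∈ t, volume (S ∩ U x) := measure_biUnion_finset_le t _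
      _ ≤ t.card • ((ENNReal.ofReal c)⁻¹ * ENNReal.ofReal (D * ε)) :=
          Finset.sum_le_card_nsmul t _ _ hpiece
      _ = (t.card : ℝ≥0∞) * ((ENNReal.ofReal c)⁻¹ * ENNReal.ofReal (D * ε)) := by
          rw [nsmul_eq_mul]
      _ = ENNReal.ofReal ((t.card : ℝ) * (c⁻¹ * (D * ε))) := by
          conv_rhs => rw [ENNReal.ofReal_mul (by positivity),
            ENNReal.ofReal_mul (by positivity)]
          rw [ENNReal.ofReal_inv_of_pos hcpos, ENNReal.ofReal_natCast]
      _ ≤ ENNReal.ofReal (C * ε) := by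
          apply ENNReal.ofReal_le_ofReal
          have h4 : C₁ ≤ C := le_max_right _ _
          have key : (t.card : ℝ) * (c⁻¹ * (D * ε)) ≤ C₁ * ε := by
            have h8 : (t.card : ℝ) * (c⁻¹ * (D * ε)) ≤
                ((t.card : ℝ) + 1) * (c⁻¹ * (D * ε)) := by
              apply mul_le_mul_of_nonneg_right (by linarith) (by positivity)
            have h9 : ((t.card : ℝ) + 1) * (c⁻¹ * (D * ε)) = C₁ * ε := by
              rw [hC₁]; ring
            linarith
          exact le_trans key (mul_le_mul_of_nonneg_right h4 (le_of_lt hε))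
  · -- degenerate case : all coordinates of σ are small
    push_neg at hcase
    have hsum : (∑ j, σ j ^ 2) ≤ (N : ℝ) * η ^ 2 := by
      calc (∑ j, σ j ^ 2) ≤ Finset.univ.card • η ^ 2 := by
            apply Finset.sum_le_card_nsmul
            intro j _
            have := le_of_lt (hcase j)
            calc σ j ^ 2 = |σ j| ^ 2 := (sq_abs _).symm
              _ ≤ η ^ 2 := by
                  apply pow_le_pow_left₀ (abs_nonneg _) this
        _ = (N : ℝ) * η ^ 2 := by
            rw [Finset.card_univ, Fintype.card_fin, nsmul_eq_mul]
    have hNη2 : (N : ℝ) * η ^ 2 ≤ 1 / 16 := by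
      have h1 : η ^ 2 = 1 / (4 * (N : ℝ) * (R + 1)) ^ 2 := by
        rw [hη, div_pow, one_pow]
      rw [h1, mul_one_div, div_le_div_iff₀ (by positivity) (by norm_num)]
      nlinarith [hNR, hR1, mul_le_mul hNR hNR (by norm_num) (by linarith : (0:ℝ) ≤ (N:ℝ)),
        sq_nonneg ((N:ℝ) * (R + 1) - 1)]
    have hNRη : (N : ℝ) * R * η ≤ 1 / 4 := by
      rw [hη, mul_one_div, div_le_div_iff₀ (by positivity) (by norm_num)]
      nlinarith [hNR, hRpos]
    have hu : (1 : ℝ) / 2 ≤ |u| := by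
      have h1 : u ^ 2 = 1 - ∑ j, σ j ^ 2 := by linarith
      have h2 : (15 : ℝ) / 16 ≤ u ^ 2 := by
        rw [h1]
        have := le_trans hsum hNη2
        linarith
      by_contra hcon
      push_neg at hcon
      have h3 : |u| ^ 2 < (1 / 2) ^ 2 :=
        pow_lt_pow_left₀ hcon (abs_nonneg u) (by norm_num)
      rw [sq_abs] at h3
      norm_num at h3
      linarith
    by_cases hε4 : (1 : ℝ) / 4 ≤ ε
    · -- large ε : use the measure of the whole cube
      calc volume S ≤ volume K := measure_mono hSK
        _ = ENNReal.ofReal ((2 * A) ^ N) := by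
            rw [hK, volume_pi_pi]
            simp only [Real.volume_Icc]
            rw [Finset.prod_const, Finset.card_univ, Fintype.card_fin,
              ← ENNReal.ofReal_pow (by linarith)]
            congr 1
            ring
        _ ≤ ENNReal.ofReal (C * ε) := by
            apply ENNReal.ofReal_le_ofReal
            have h1 : 4 * (2 * A) ^ N ≤ C := le_max_left _ _
            nlinarith [pow_pos (by linarith : (0:ℝ) < 2 * A) N]
    · -- small ε : the set is empty
      have hempty : S = ∅ := by
        rw [Set.eq_empty_iff_forall_notMem]
        rintro v ⟨hv1, hv2⟩
        have hvK : v ∈ K := by intro j _; exact hv1 j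
        have hbound : |∑ j, a v j * σ j| ≤ (N : ℝ) * R * η := by
          calc |∑ j, a v j * σ j| ≤ ∑ j, |a v j * σ j| := Finset.abs_sum_le_sum_abs _ _
            _ ≤ Finset.univ.card • (R * η) := by
                apply Finset.sum_le_card_nsmul
                intro j _
                rw [abs_mul]
                apply mul_le_mul (hRb v hvK j) (le_of_lt (hcase j)) (abs_nonneg _)
                  (le_of_lt hRpos)
            _ = (N : ℝ) * (R * η) := by
                rw [Finset.card_univ, Fintype.card_fin, nsmul_eq_mul]
            _ = (N : ℝ) * R * η := by ring
        have h1 : |u| - |∑ j, a v j * σ j| ≤ |(∑ j, a v j * σ j) - u| := by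
          have := abs_sub_abs_le_abs_sub u (∑ j, a v j * σ j)
          rw [abs_sub_comm] at this
          linarith
        have : (1 : ℝ) / 4 ≤ |(∑ j, a v j * σ j) - u| := by linarith
        linarith
      rw [hempty]
      simp
end

section
/- Let N ≥ 1 be an integer, A > 0, and let a : ℝ^N → ℝ^N be a smooth (C^∞) map whose differential Da(v) is invertible at every v ∈ ℝ^N. Let (u,σ) ∈ ℝ × ℝ^N with u² + ‖σ‖² = 1, and suppose there exists v₀ in the open cube (−A,A)^N with a(v₀)·σ = u. Then there exist c > 0 and ε₀ > 0 such that for every ε ∈ (0,ε₀), meas{ v ∈ [−A,A]^N : |a(v)·σ − u| ≤ ε } ≥ c·ε. (Hence the sublevel measure is of exact order ε, and the exponent α = 1 is optimal.) -/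
open MeasureTheory Set

lemma slice_lemma {g : ℝ → ℝ} {p q ε L : ℝ} (hpq : p ≤ q) (hL : 0 < L)
    (hlip : ∀ s ∈ Icc p q, ∀ t ∈ Icc p q, |g s - g t| ≤ L * |s - t|)
    (hε : 0 < ε)
    (hsign : (g p ≤ 0 ∧ 0 ≤ g q) ∨ (g q ≤ 0 ∧ 0 ≤ g p)) :
    ENNReal.ofReal (min (ε / L) (q - p)) ≤ volume {t ∈ Icc p q | |g t| ≤ ε} := by
  -- continuity from lipschitz
  have hcont : ContinuousOn g (Icc p q) := by
    have : LipschitzOnWith L.toNNReal g (Icc p q) := by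
      rw [lipschitzOnWith_iff_dist_le_mul]
      intro x hx y hy
      simpa [Real.dist_eq, Real.coe_toNNReal L hL.le] using hlip x hx y hy
    exact this.continuousOn
  -- get a root
  obtain ⟨t₀, ht₀, hgt₀⟩ : ∃ t₀ ∈ Icc p q, g t₀ = 0 := by
    rcases hsign with ⟨h1, h2⟩ | ⟨h1, h2⟩
    · have := intermediate_value_Icc hpq hcont (a := p) (b := q)
      have h0 : (0 : ℝ) ∈ Icc (g p) (g q) := ⟨h1, h2⟩
      obtain ⟨t₀, ht₀, hgt₀⟩ := this h0
      exact ⟨t₀, ht₀, hgt₀⟩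
    · have := intermediate_value_Icc' hpq hcont (a := p) (b := q)
      have h0 : (0 : ℝ) ∈ Icc (g q) (g p) := ⟨h1, h2⟩
      obtain ⟨t₀, ht₀, hgt₀⟩ := this h0
      exact ⟨t₀, ht₀, hgt₀⟩
  set e := ε / L with he
  have he0 : 0 < e := div_pos hε hL
  have hsub : Icc (max p (t₀ - e)) (min q (t₀ + e)) ⊆ {t ∈ Icc p q | |g t| ≤ ε} := by
    intro t ht
    rcases ht with ⟨ht1, ht2⟩
    have htp : p ≤ t := le_trans (le_max_left _ _) ht1
    have htq : t ≤ q := le_trans ht2 (min_le_left _ _)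
    refine ⟨⟨htp, htq⟩, ?_⟩
    have h1 : t₀ - e ≤ t := le_trans (le_max_right _ _) ht1
    have h2 : t ≤ t₀ + e := le_trans ht2 (min_le_right _ _)
    have := hlip t ⟨htp, htq⟩ t₀ ht₀
    rw [hgt₀, sub_zero] at this
    have habs : |t - t₀| ≤ e := abs_le.2 ⟨by linarith, by linarith⟩
    calc |g t| ≤ L * |t - t₀| := this
      _ ≤ L * e := by nlinarith [abs_nonneg (t - t₀)]
      _ = ε := by rw [he]; field_simp
  calc ENNReal.ofReal (min e (q - p))
      ≤ ENNReal.ofReal (min q (t₀ + e) - max p (t₀ - e)) := by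
        apply ENNReal.ofReal_le_ofReal
        rcases ht₀ with ⟨hp0, h0q⟩
        rcases le_total (t₀ + e) q with h | h
        · have : max p (t₀ - e) ≤ t₀ := max_le hp0 (by linarith)
          have : min q (t₀ + e) = t₀ + e := min_eq_right h
          simp only [this]
          have := max_le hp0 (show t₀ - e ≤ t₀ by linarith)
          calc min e (q-p) ≤ e := min_le_left _ _
            _ ≤ t₀ + e - max p (t₀ - e) := by linarith
        · have hmin : min q (t₀ + e) = q := min_eq_left h
          rw [hmin]
          have : max p (t₀ - e) ≤ max p (q - e) := max_le_max le_rfl (by linarith)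
          rcases le_total p (q - e) with h' | h'
          · have : max p (q - e) = q - e := max_eq_right h'
            calc min e (q-p) ≤ e := min_le_left _ _
              _ ≤ q - max p (t₀ - e) := by
                  have h2 : max p (t₀ - e) ≤ q - e := by
                    apply max_le (by linarith) (by linarith)
                  linarith
          · have : max p (q - e) = p := max_eq_left h'
            calc min e (q-p) ≤ q - p := min_le_right _ _
              _ ≤ q - max p (t₀ - e) := by
                  have h2 : max p (t₀ - e) ≤ p := by
                    apply max_le le_rfl (by linarith)
                  linarith
    _ = volume (Icc (max p (t₀ - e)) (min q (t₀ + e))) := by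
        rw [Real.volume_Icc]
    _ ≤ volume {t ∈ Icc p q | |g t| ≤ ε} := measure_mono hsub

set_option maxHeartbeats 1000000 in
theorem stmt_17 (N : ℕ) (hN : 1 ≤ N) (A : ℝ) (hA : 0 < A)
    (a : (Fin N → ℝ) → (Fin N → ℝ)) (ha : ContDiff ℝ (⊤ : ℕ∞) a)
    (hDa : ∀ v, Function.Bijective (fderiv ℝ a v))
    (u : ℝ) (σ : Fin N → ℝ) (huσ : u ^ 2 + ∑ i, σ i ^ 2 = 1)
    (v₀ : Fin N → ℝ) (hv₀ : ∀ i, v₀ i ∈ Set.Ioo (-A) A)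
    (hroot : ∑ i, a v₀ i * σ i = u) :
    ∃ c : ℝ, 0 < c ∧ ∃ ε₀ : ℝ, 0 < ε₀ ∧ ∀ ε ∈ Set.Ioo 0 ε₀,
      ENNReal.ofReal (c * ε) ≤
        volume {v : Fin N → ℝ | (∀ i, v i ∈ Set.Icc (-A) A) ∧
          |(∑ i, a v i * σ i) - u| ≤ ε} := by
  obtain ⟨n, rfl⟩ : ∃ n, N = n + 1 := ⟨N - 1, (Nat.succ_pred_eq_of_pos hN).symm⟩
  set F : (Fin (n+1) → ℝ) → ℝ := fun v => ∑ i, a v i * σ i with hFdef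
  -- F is smooth
  have hFc : ContDiff ℝ (⊤ : ℕ∞) F :=
    ContDiff.sum fun i _ => (contDiff_pi.1 ha i).mul contDiff_const
  have hFcont : Continuous F := hFc.continuous
  -- the sum of squares is positive
  have hs : 0 < ∑ i, σ i ^ 2 := by
    rcases (Finset.sum_nonneg fun i _ => sq_nonneg (σ i)).lt_or_eq with h | h
    · exact h
    · exfalso
      have hz : ∀ i ∈ Finset.univ, σ i ^ 2 = 0 :=
        (Finset.sum_eq_zero_iff_of_nonneg fun i _ => sq_nonneg (σ i)).1 h.symm
      have hσ0 : ∀ i, σ i = 0 := fun i => by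
        have := hz i (Finset.mem_univ i); exact pow_eq_zero_iff (by norm_num) |>.1 this
      have hu0 : u = 0 := by rw [← hroot]; simp [hσ0]
      rw [hu0, ← h] at huσ; norm_num at huσ
  -- the linear functional ℓ
  set ℓ : (Fin (n+1) → ℝ) →L[ℝ] ℝ :=
    ∑ i, σ i • ContinuousLinearMap.proj (R := ℝ) (φ := fun _ : Fin (n+1) => ℝ) i with hℓdef
  have hℓ : ∀ w, ℓ w = ∑ i, σ i * w i := by
    intro w; simp [hℓdef, ContinuousLinearMap.sum_apply]
  -- derivative of F at v₀
  set D : (Fin (n+1) → ℝ) →L[ℝ] ℝ := ℓ.comp (fderiv ℝ a v₀) with hDdef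
  have hD : HasFDerivAt F D v₀ := by
    have haD : HasFDerivAt a (fderiv ℝ a v₀) v₀ :=
      (ha.differentiable (by simp) v₀).hasFDerivAt
    have := ℓ.hasFDerivAt.comp v₀ haD
    have heq : (ℓ ∘ a) = F := by
      funext v; simp only [Function.comp, hℓ, hFdef]
      exact Finset.sum_congr rfl fun i _ => mul_comm _ _
    rwa [heq] at this
  -- a preimage of σ
  obtain ⟨e, he⟩ := (hDa v₀).2 σ
  have hDe : D e = ∑ i, σ i ^ 2 := by
    rw [hDdef]; simp only [ContinuousLinearMap.comp_apply, he, hℓ]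
    exact Finset.sum_congr rfl fun i _ => (sq (σ i)).symm
  -- a coordinate with nonzero partial derivative
  obtain ⟨j, hm⟩ : ∃ j, D (Pi.single j 1) ≠ 0 := by
    by_contra h
    push_neg at h
    have hee : e = ∑ jj : Fin (n+1), e jj • (Pi.single jj (1:ℝ) : Fin (n+1) → ℝ) := by
      funext k; simp [Pi.single_apply]
    have : D e = 0 := by rw [hee, map_sum]; simp [h]
    rw [hDe] at this; linarith
  set m : ℝ := D (Pi.single j 1) with hmdef
  -- line through v₀ in direction j
  set g : ℝ → ℝ := fun t => F (v₀ + t • (Pi.single j (1:ℝ) : Fin (n+1) → ℝ)) with hgdef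
  have hg0 : g 0 = u := by simp [hgdef, hFdef, hroot]
  have hgD : HasDerivAt g m 0 := by
    have hline : HasDerivAt (fun t : ℝ => v₀ + t • (Pi.single j (1:ℝ) : Fin (n+1) → ℝ))
        (Pi.single j (1:ℝ) : Fin (n+1) → ℝ) 0 := by
      simpa using ((hasDerivAt_id (0:ℝ)).smul_const (Pi.single j (1:ℝ) : Fin (n+1) → ℝ)).const_add v₀
    have hd : HasFDerivAt F D (v₀ + (0:ℝ) • (Pi.single j (1:ℝ) : Fin (n+1) → ℝ)) := by
      simpa using hD
    exact hd.comp_hasDerivAt 0 hline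
  -- quantitative derivative bound
  obtain ⟨δ₁, hδ₁0, hδ₁⟩ : ∃ δ₁ > 0, ∀ t : ℝ, |t| < δ₁ → |g t - u - t * m| ≤ |m|/2 * |t| := by
    rw [hasDerivAt_iff_isLittleO] at hgD
    have h2 := hgD.def (half_pos (abs_pos.2 hm))
    rw [Metric.eventually_nhds_iff] at h2
    obtain ⟨δ₁, hδ₁0, h3⟩ := h2
    refine ⟨δ₁, hδ₁0, fun t ht => ?_⟩
    have := h3 (show dist t 0 < δ₁ by simpa [Real.dist_eq] using ht)
    simpa [Real.norm_eq_abs, Real.dist_eq, hg0] using this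
  -- radius r keeping things in the cube
  obtain ⟨r, hr0, hrA⟩ : ∃ r > 0, ∀ (i : Fin (n+1)) (x : ℝ), |x - v₀ i| ≤ r → x ∈ Icc (-A) A := by
    refine ⟨Finset.univ.inf' Finset.univ_nonempty (fun i => min (A - v₀ i) (v₀ i + A)), ?_, ?_⟩
    · rw [gt_iff_lt, Finset.lt_inf'_iff]
      intro i _
      obtain ⟨h1, h2⟩ := hv₀ i
      exact lt_min (by linarith) (by linarith)
    · intro i x hx
      have hle : Finset.univ.inf' Finset.univ_nonempty (fun i => min (A - v₀ i) (v₀ i + A))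
          ≤ min (A - v₀ i) (v₀ i + A) := Finset.inf'_le _ (Finset.mem_univ i)
      have h1 := le_trans hx hle
      have h4 := abs_le.1 (le_trans h1 (min_le_left _ _))
      have h5 := abs_le.1 (le_trans h1 (min_le_right _ _))
      exact ⟨by linarith [h5.1], by linarith [h4.2]⟩
  -- choose δ
  set δ : ℝ := min (δ₁/2) r with hδdef
  have hδ0 : 0 < δ := lt_min (by linarith) hr0
  have hδr : δ ≤ r := min_le_right _ _
  have hδδ₁ : δ < δ₁ := lt_of_le_of_lt (min_le_left _ _) (by linarith)
  clear_value m
  set η : ℝ := |m| * δ / 2 with hηdef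
  have hη0 : 0 < η := by
    have := abs_pos.2 hm
    positivity
  clear_value δ η g
  -- sign facts at the endpoints of the segment
  have hsgn : (g (-δ) - u ≤ -η ∧ η ≤ g δ - u) ∨ (g δ - u ≤ -η ∧ η ≤ g (-δ) - u) := by
    have h1 := hδ₁ δ (by rw [abs_of_pos hδ0]; exact hδδ₁)
    have h2 := hδ₁ (-δ) (by rw [abs_neg, abs_of_pos hδ0]; exact hδδ₁)
    rw [abs_of_pos hδ0] at h1
    rw [abs_neg, abs_of_pos hδ0] at h2
    rcases lt_or_gt_of_ne hm with hneg | hpos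
    · right
      rw [abs_of_neg hneg] at h1 h2 hηdef
      have h1' := abs_le.1 h1
      have h2' := abs_le.1 h2
      constructor
      · linarith [h1'.2]
      · linarith [h2'.1]
    · left
      rw [abs_of_pos hpos] at h1 h2 hηdef
      have h1' := abs_le.1 h1
      have h2' := abs_le.1 h2
      constructor
      · linarith [h2'.2]
      · linarith [h1'.1]
  -- continuity at the two endpoint points
  have hcont := Metric.continuous_iff.1 hFcont
  obtain ⟨δp, hδp0, hδp⟩ := hcont (v₀ + δ • (Pi.single j (1:ℝ) : Fin (n+1) → ℝ)) (η/2) (by linarith)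
  obtain ⟨δn, hδn0, hδn⟩ := hcont (v₀ + (-δ) • (Pi.single j (1:ℝ) : Fin (n+1) → ℝ)) (η/2) (by linarith)
  -- choose δ'
  set δ' : ℝ := min (min (δp/2) (δn/2)) r with hδ'def
  have hδ'0 : 0 < δ' := lt_min (lt_min (by linarith) (by linarith)) hr0
  have hδ'r : δ' ≤ r := min_le_right _ _
  have hδ'p : δ' < δp := lt_of_le_of_lt (le_trans (min_le_left _ _) (min_le_left _ _)) (by linarith)
  have hδ'n : δ' < δn := lt_of_le_of_lt (le_trans (min_le_left _ _) (min_le_right _ _)) (by linarith)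
  -- Lipschitz constant on the ball of radius r
  obtain ⟨L, hL1, hlipF⟩ : ∃ L, 1 ≤ L ∧ ∀ x ∈ Metric.closedBall v₀ r, ∀ y ∈ Metric.closedBall v₀ r,
      |F y - F x| ≤ L * ‖y - x‖ := by
    obtain ⟨C, hC⟩ := (isCompact_closedBall v₀ r).exists_bound_of_continuousOn
      ((hFc.continuous_fderiv (by simp)).norm.continuousOn)
    refine ⟨max C 1, le_max_right _ _, fun x hx y hy => ?_⟩
    have := Convex.norm_image_sub_le_of_norm_fderiv_le
      (f := F) (C := max C 1)
      (fun z _ => (hFc.differentiable (by simp)).differentiableAt)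
      (fun z hz => le_trans (le_trans (le_abs_self _) (hC z hz)) (le_max_left _ _))
      (convex_closedBall v₀ r) hx hy
    simpa [Real.norm_eq_abs] using this
  have hL0 : 0 < L := by linarith
  clear_value δ'
  -- final constants
  refine ⟨(2*δ')^n / L, by positivity, L * δ, by positivity, ?_⟩
  rintro ε ⟨hε0, hεu⟩
  set S : Set (Fin (n+1) → ℝ) := {v | (∀ i, v i ∈ Icc (-A) A) ∧ |F v - u| ≤ ε} with hSdef
  have hSmeas : MeasurableSet S := by
    have h1 : IsClosed {v : Fin (n+1) → ℝ | ∀ i, v i ∈ Icc (-A) A} := by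
      have : {v : Fin (n+1) → ℝ | ∀ i, v i ∈ Icc (-A) A}
          = Set.pi univ (fun _ : Fin (n+1) => Icc (-A) A) := by
        ext v; simp [Set.mem_pi, Set.mem_Icc, Pi.le_def, forall_and]
      rw [this]; exact isClosed_set_pi (fun i _ => isClosed_Icc)
    have h2 : IsClosed {v : Fin (n+1) → ℝ | |F v - u| ≤ ε} :=
      isClosed_le (continuous_abs.comp (hFcont.sub continuous_const)) continuous_const
    rw [hSdef, setOf_and]
    exact (h1.inter h2).measurableSet
  set eqv := MeasurableEquiv.piFinSuccAbove (fun _ : Fin (n+1) => ℝ) j with heqv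
  have hmp := volume_preserving_piFinSuccAbove (fun _ : Fin (n+1) => ℝ) j
  have hins : ∀ (t : ℝ) (v' : Fin n → ℝ), eqv.symm (t, v') = j.insertNth t v' := by
    intro t v'; simp [heqv, MeasurableEquiv.piFinSuccAbove, Fin.insertNthEquiv]
  set B' : Set (Fin n → ℝ) :=
    Set.pi univ (fun i : Fin n => Icc (v₀ (j.succAbove i) - δ') (v₀ (j.succAbove i) + δ')) with hB'def
  have hB'meas : MeasurableSet B' := MeasurableSet.univ_pi fun i => measurableSet_Icc
  have hB'vol : volume B' = ENNReal.ofReal ((2*δ')^n) := by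
    rw [hB'def, volume_pi_pi]
    have h2 : ∀ x : ℝ, x + δ' - (x - δ') = 2*δ' := fun x => by ring
    simp only [Real.volume_Icc, h2]
    rw [Finset.prod_const, ← ENNReal.ofReal_pow (by linarith), Finset.card_univ, Fintype.card_fin]
  -- slice estimate
  have hslice : ∀ v' ∈ B',
      ENNReal.ofReal (ε/L) ≤ volume ((fun t : ℝ => (t, v')) ⁻¹' (eqv.symm ⁻¹' S)) := by
    intro v' hv'
    have hv'c : ∀ i : Fin n, |v' i - v₀ (j.succAbove i)| ≤ δ' := by
      intro i
      have h := hv' i (mem_univ i)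
      rw [abs_le]; exact ⟨by linarith [h.1], by linarith [h.2]⟩
    set p : ℝ := v₀ j - δ with hpdef
    set q : ℝ := v₀ j + δ with hqdef
    set gl : ℝ → ℝ := fun t => F (j.insertNth t v') - u with hgldef
    have hK : ∀ t ∈ Icc p q, j.insertNth t v' ∈ Metric.closedBall v₀ r := by
      intro t ht
      rw [Metric.mem_closedBall, dist_pi_le_iff hr0.le]
      intro k
      rcases eq_or_ne k j with rfl | hk
      · rw [Fin.insertNth_apply_same, Real.dist_eq, abs_le]
        exact ⟨by linarith [ht.1, hδr], by linarith [ht.2, hδr]⟩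
      · obtain ⟨i, rfl⟩ := Fin.exists_succAbove_eq hk
        rw [Fin.insertNth_apply_succAbove, Real.dist_eq]
        exact le_trans (hv'c i) hδ'r
    have hlipgl : ∀ s' ∈ Icc p q, ∀ t ∈ Icc p q, |gl s' - gl t| ≤ L * |s' - t| := by
      intro s' hs' t ht'
      have h1 := hlipF _ (hK t ht') _ (hK s' hs')
      have h2 : ‖(j.insertNth s' v' : Fin (n+1) → ℝ) - j.insertNth t v'‖ ≤ |s' - t| := by
        have h3 : dist (j.insertNth s' v' : Fin (n+1) → ℝ) (j.insertNth t v') ≤ |s' - t| := by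
          rw [dist_pi_le_iff (abs_nonneg _)]
          intro k
          rcases eq_or_ne k j with rfl | hk
          · rw [Fin.insertNth_apply_same, Fin.insertNth_apply_same, Real.dist_eq]
          · obtain ⟨i, rfl⟩ := Fin.exists_succAbove_eq hk
            rw [Fin.insertNth_apply_succAbove, Fin.insertNth_apply_succAbove]
            simp [abs_nonneg]
        rwa [dist_eq_norm] at h3
      calc |gl s' - gl t| = |F (j.insertNth s' v') - F (j.insertNth t v')| := by
            rw [hgldef]; ring_nf
        _ ≤ L * ‖(j.insertNth s' v' : Fin (n+1) → ℝ) - j.insertNth t v'‖ := h1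
        _ ≤ L * |s' - t| := mul_le_mul_of_nonneg_left h2 hL0.le
    -- sign conditions
    have hdn : |F (j.insertNth p v') - g (-δ)| < η / 2 := by
      have hd : dist (j.insertNth p v') (v₀ + (-δ) • (Pi.single j (1:ℝ) : Fin (n+1) → ℝ)) < δn := by
        rw [dist_pi_lt_iff hδn0]
        intro k
        rcases eq_or_ne k j with rfl | hk
        · rw [Fin.insertNth_apply_same, Real.dist_eq]
          have hz : p - (v₀ + (-δ) • (Pi.single k (1:ℝ) : Fin (n+1) → ℝ)) k = 0 := by
            simp only [Pi.add_apply, Pi.smul_apply, Pi.single_eq_same, smul_eq_mul, mul_one, hpdef]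
            ring
          rw [hz, abs_zero]; exact hδn0
        · obtain ⟨i, rfl⟩ := Fin.exists_succAbove_eq hk
          rw [Fin.insertNth_apply_succAbove, Real.dist_eq]
          have : (v₀ + (-δ) • (Pi.single j (1:ℝ) : Fin (n+1) → ℝ)) (j.succAbove i)
              = v₀ (j.succAbove i) := by
            simp [Pi.single_apply, Fin.succAbove_ne j i]
          rw [this]
          exact lt_of_le_of_lt (hv'c i) hδ'n
      have := hδn _ hd
      simpa [Real.dist_eq, hgdef] using this
    have hdp : |F (j.insertNth q v') - g δ| < η / 2 := by
      have hd : dist (j.insertNth q v') (v₀ + δ • (Pi.single j (1:ℝ) : Fin (n+1) → ℝ)) < δp := by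
        rw [dist_pi_lt_iff hδp0]
        intro k
        rcases eq_or_ne k j with rfl | hk
        · rw [Fin.insertNth_apply_same, Real.dist_eq]
          have hz : q - (v₀ + δ • (Pi.single k (1:ℝ) : Fin (n+1) → ℝ)) k = 0 := by
            simp only [Pi.add_apply, Pi.smul_apply, Pi.single_eq_same, smul_eq_mul, mul_one, hqdef]
            ring
          rw [hz, abs_zero]; exact hδp0
        · obtain ⟨i, rfl⟩ := Fin.exists_succAbove_eq hk
          rw [Fin.insertNth_apply_succAbove, Real.dist_eq]
          have : (v₀ + δ • (Pi.single j (1:ℝ) : Fin (n+1) → ℝ)) (j.succAbove i)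
              = v₀ (j.succAbove i) := by
            simp [Pi.single_apply, Fin.succAbove_ne j i]
          rw [this]
          exact lt_of_le_of_lt (hv'c i) hδ'p
      have := hδp _ hd
      simpa [Real.dist_eq, hgdef] using this
    have hsign : (gl p ≤ 0 ∧ 0 ≤ gl q) ∨ (gl q ≤ 0 ∧ 0 ≤ gl p) := by
      have h1 := abs_lt.1 hdn
      have h2 := abs_lt.1 hdp
      rcases hsgn with ⟨ha1, ha2⟩ | ⟨ha1, ha2⟩
      · left
        constructor
        · simp only [hgldef]; linarith [h1.1, h1.2]
        · simp only [hgldef]; linarith [h2.1, h2.2]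
      · right
        constructor
        · simp only [hgldef]; linarith [h2.1, h2.2]
        · simp only [hgldef]; linarith [h1.1, h1.2]
    have hpq : p ≤ q := by rw [hpdef, hqdef]; linarith
    have hmain := slice_lemma hpq hL0 hlipgl hε0 hsign
    have hmin : min (ε / L) (q - p) = ε / L := by
      apply min_eq_left
      have : ε / L < δ := (div_lt_iff₀ hL0).2 (by linarith [hεu])
      rw [hqdef, hpdef]; linarith
    rw [hmin] at hmain
    refine le_trans hmain (measure_mono ?_)
    intro t ht
    rcases ht with ⟨htI, htε⟩
    rw [mem_preimage, mem_preimage, hins t v', hSdef]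
    constructor
    · intro k
      rcases eq_or_ne k j with rfl | hk
      · rw [Fin.insertNth_apply_same]
        apply hrA k t
        rw [abs_le]
        exact ⟨by linarith [htI.1, hδr], by linarith [htI.2, hδr]⟩
      · obtain ⟨i, rfl⟩ := Fin.exists_succAbove_eq hk
        rw [Fin.insertNth_apply_succAbove]
        exact hrA _ _ (le_trans (hv'c i) hδ'r)
    · simpa [hgldef] using htε
  -- put it together
  have hTmeas : MeasurableSet (eqv.symm ⁻¹' S) := eqv.symm.measurable hSmeas
  calc ENNReal.ofReal ((2*δ')^n / L * ε)
      = ENNReal.ofReal (ε/L) * ENNReal.ofReal ((2*δ')^n) := by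
        rw [← ENNReal.ofReal_mul (by positivity)]
        congr 1
        field_simp
    _ = ENNReal.ofReal (ε/L) * volume B' := by rw [hB'vol]
    _ = ∫⁻ v', B'.indicator (fun _ => ENNReal.ofReal (ε/L)) v' := by
        rw [lintegral_indicator hB'meas, setLIntegral_const]
    _ ≤ ∫⁻ v', volume ((fun t : ℝ => (t, v')) ⁻¹' (eqv.symm ⁻¹' S)) := by
        apply lintegral_mono
        intro v'
        by_cases h : v' ∈ B'
        · rw [indicator_of_mem h]; exact hslice v' h
        · rw [indicator_of_notMem h]; exact zero_le
    _ = (volume.prod volume) (eqv.symm ⁻¹' S) := (Measure.prod_apply_symm hTmeas).symm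
    _ = volume S := (hmp.symm eqv).measure_preimage hSmeas.nullMeasurableSet
end
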